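/- arXiv:1601.06105 — 5 statements merged into one kernel-verified Lean document; each statement's English description precedes it below -/
import Mathlib

section
/- Among all measurable sets A ⊆ [0,1]^d with P_0(A) ≥ 1 − α, the set U = {x : p(x) ≥ α} (where p is the p-value transform with uniform mixing density) achieves the minimum Lebesgue volume, assuming f_0 has atomless level distribution. -/
open MeasureTheory Set
open scoped ENNReal

/-- Among all measurable sets A ⊆ [0,1]^d with P₀(A) ≥ 1 − α, the set
U = {x : p(x) ≥ α} achieves the minimum Lebesgue volume, assuming f₀ has
atomless level distribution. -/
theorem stmt3 {d : ℕ} (f₀ : (Fin d → ℝ) → ℝ≥0∞) (hf : Measurable f₀)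
    (P₀ : Measure (Fin d → ℝ)) [IsProbabilityMeasure P₀]
    (hP₀ : P₀ = (volume.restrict (Icc (0 : Fin d → ℝ) 1)).withDensity f₀)
    (hatom : ∀ c : ℝ≥0∞, P₀ {x | f₀ x = c} = 0)
    (p : (Fin d → ℝ) → ℝ)
    (hp : ∀ η, p η = (P₀ {x | f₀ x ≤ f₀ η}).toReal)
    (α : ℝ) (hα : α ∈ Ioo (0 : ℝ) 1)
    (U : Set (Fin d → ℝ)) (hU : U = {x ∈ Icc (0 : Fin d → ℝ) 1 | α ≤ p x}) :
    ENNReal.ofReal (1 - α) ≤ P₀ U ∧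
      ∀ A : Set (Fin d → ℝ), MeasurableSet A → A ⊆ Icc (0 : Fin d → ℝ) 1 →
        ENNReal.ofReal (1 - α) ≤ P₀ A → volume U ≤ volume A := by
  have hIcc : MeasurableSet (Icc (0 : Fin d → ℝ) 1) := measurableSet_Icc
  set Q : Set (Fin d → ℝ) := Icc 0 1 with hQ
  -- P₀ of measurable subsets of Q is the integral of f₀
  have hPs : ∀ s : Set (Fin d → ℝ), MeasurableSet s → s ⊆ Q →
      P₀ s = ∫⁻ x in s, f₀ x ∂volume := by
    intro s hs hsub
    rw [hP₀, withDensity_apply _ hs, Measure.restrict_restrict hs,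
        inter_eq_self_of_subset_left hsub]
  have hnull : P₀ Qᶜ = 0 := by
    rw [hP₀, withDensity_apply _ hIcc.compl, Measure.restrict_restrict hIcc.compl,
        compl_inter_self, Measure.restrict_empty, lintegral_zero_measure]
  set G : ℝ≥0∞ → ℝ≥0∞ := fun c => P₀ {x | f₀ x ≤ c} with hG
  have hGmono : Monotone G := fun a b hab => measure_mono (fun x hx => le_trans hx hab)
  set αe := ENNReal.ofReal α with hαe
  have hαe0 : 0 < αe := ENNReal.ofReal_pos.2 hα.1
  have hαe1 : αe < 1 := ENNReal.ofReal_lt_one.2 hα.2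
  set S : Set ℝ≥0∞ := {c | αe ≤ G c} with hS
  set τ := sInf S with hτ
  have hSup : ∀ {c c' : ℝ≥0∞}, c ∈ S → c ≤ c' → c' ∈ S :=
    fun hc hcc' => le_trans hc (hGmono hcc')
  have hmemS : ∀ c, τ < c → c ∈ S := by
    intro c hc
    obtain ⟨s, hsS, hs⟩ := sInf_lt_iff.mp hc
    exact hSup hsS hs.le
  -- τ < ∞
  have hfin1 : P₀ {x | f₀ x ≠ ∞} = 1 := by
    have h1 : {x | f₀ x ≠ ∞} = {x | f₀ x = ∞}ᶜ := rfl
    have hm : MeasurableSet {x | f₀ x = (∞ : ℝ≥0∞)} := hf (measurableSet_singleton _)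
    rw [h1, measure_compl hm (measure_ne_top _ _), hatom ∞, measure_univ, tsub_zero]
  have hτ_lt : τ < ∞ := by
    have hun : ⋃ n : ℕ, {x | f₀ x ≤ (n : ℝ≥0∞)} = {x | f₀ x ≠ ∞} := by
      ext x
      simp only [mem_iUnion, mem_setOf_eq]
      constructor
      · rintro ⟨n, hn⟩
        exact (hn.trans_lt (ENNReal.natCast_lt_top n)).ne
      · intro hx
        obtain ⟨n, hn⟩ := ENNReal.exists_nat_gt hx
        exact ⟨n, hn.le⟩
    have hmon : Monotone (fun n : ℕ => {x | f₀ x ≤ (n : ℝ≥0∞)}) := by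
      intro a b hab x hx
      simp only [mem_setOf_eq] at hx ⊢
      exact hx.trans (by exact_mod_cast hab)
    have hsup : ⨆ n : ℕ, G (n : ℝ≥0∞) = 1 := by
      have := hmon.measure_iUnion (μ := P₀)
      rw [hun, hfin1] at this
      exact this.symm
    have : αe < ⨆ n : ℕ, G (n : ℝ≥0∞) := by rw [hsup]; exact hαe1
    obtain ⟨n, hn⟩ := lt_iSup_iff.mp this
    exact lt_of_le_of_lt (sInf_le hn.le) (ENNReal.natCast_lt_top n)
  -- right continuity: αe ≤ G τ
  have hGτ : αe ≤ G τ := by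
    have key : {x | f₀ x ≤ τ} = ⋂ n : ℕ, {x | f₀ x ≤ τ + ((n : ℝ≥0∞) + 1)⁻¹} := by
      ext x
      simp only [mem_iInter, mem_setOf_eq]
      constructor
      · intro h n; exact le_trans h le_self_add
      · intro h
        refine ENNReal.le_of_forall_pos_le_add fun ε hε _ => ?_
        obtain ⟨n, hn⟩ := ENNReal.exists_inv_nat_lt (by exact_mod_cast hε.ne' : (ε : ℝ≥0∞) ≠ 0)
        have h1 : ((n : ℝ≥0∞) + 1)⁻¹ ≤ (ε : ℝ≥0∞) :=
          le_trans (ENNReal.inv_le_inv.2 le_self_add) hn.le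
        exact le_trans (h n) (add_le_add_right h1 τ)
    have hanti : Antitone (fun n : ℕ => {x | f₀ x ≤ τ + ((n : ℝ≥0∞) + 1)⁻¹}) := by
      intro a b hab x hx
      refine le_trans hx (add_le_add_right (ENNReal.inv_le_inv.2 ?_) τ)
      exact add_le_add_left (by exact_mod_cast Nat.cast_le.2 hab) 1
    have hmeas : ∀ n : ℕ, NullMeasurableSet {x | f₀ x ≤ τ + ((n : ℝ≥0∞) + 1)⁻¹} P₀ :=
      fun n => (hf measurableSet_Iic).nullMeasurableSet
    have heq := hanti.measure_iInter (μ := P₀) hmeas ⟨0, measure_ne_top _ _⟩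
    have hmem : ∀ n : ℕ, αe ≤ G (τ + ((n : ℝ≥0∞) + 1)⁻¹) := by
      intro n
      refine hmemS _ (ENNReal.lt_add_right hτ_lt.ne ?_)
      simp
    calc αe ≤ ⨅ n : ℕ, G (τ + ((n : ℝ≥0∞) + 1)⁻¹) := le_iInf hmem
      _ = P₀ {x | f₀ x ≤ τ} := by rw [key, heq]
  have hτ0 : τ ≠ 0 := by
    intro h
    have hz : {x | f₀ x ≤ (0 : ℝ≥0∞)} = {x | f₀ x = 0} := by
      ext x; simp [le_zero_iff]
    have : αe ≤ G 0 := h ▸ hGτ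
    rw [hG] at this
    simp only [hz, hatom 0] at this
    exact hαe0.ne' (le_antisymm this zero_le)
  -- P₀ {f₀ < τ} ≤ αe
  have hlt_le : P₀ {x | f₀ x < τ} ≤ αe := by
    have hsub : {x | f₀ x < τ} ⊆ ⋃ n : ℕ, {x | f₀ x ≤ τ - ((n : ℝ≥0∞) + 1)⁻¹} := by
      intro x hx
      obtain ⟨n, hn⟩ := ENNReal.exists_inv_nat_lt (tsub_pos_of_lt hx).ne'
      refine mem_iUnion.2 ⟨n, ?_⟩
      have h1 : ((n : ℝ≥0∞) + 1)⁻¹ ≤ τ - f₀ x :=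
        le_trans (ENNReal.inv_le_inv.2 le_self_add) hn.le
      have h2 : f₀ x + ((n : ℝ≥0∞) + 1)⁻¹ ≤ τ := by
        calc f₀ x + ((n : ℝ≥0∞) + 1)⁻¹ ≤ f₀ x + (τ - f₀ x) := add_le_add_right h1 _
          _ = τ := add_tsub_cancel_of_le hx.le
      exact ENNReal.le_sub_of_add_le_right (by simp) h2
    have hmon : Monotone (fun n : ℕ => {x | f₀ x ≤ τ - ((n : ℝ≥0∞) + 1)⁻¹}) := by
      intro a b hab x hx
      refine le_trans hx (tsub_le_tsub_left (ENNReal.inv_le_inv.2 ?_) τ)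
      exact add_le_add_left (by exact_mod_cast Nat.cast_le.2 hab) 1
    have hterm : ∀ n : ℕ, G (τ - ((n : ℝ≥0∞) + 1)⁻¹) ≤ αe := by
      intro n
      by_contra h
      push_neg at h
      have : τ ≤ τ - ((n : ℝ≥0∞) + 1)⁻¹ := sInf_le h.le
      exact absurd this (not_le.2 (ENNReal.sub_lt_self hτ_lt.ne hτ0 (by simp)))
    calc P₀ {x | f₀ x < τ} ≤ P₀ (⋃ n : ℕ, {x | f₀ x ≤ τ - ((n : ℝ≥0∞) + 1)⁻¹}) :=
          measure_mono hsub
      _ = ⨆ n : ℕ, G (τ - ((n : ℝ≥0∞) + 1)⁻¹) := hmon.measure_iUnion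
      _ ≤ αe := iSup_le hterm
  -- P₀ {f₀ < τ} = αe
  have hflt : P₀ {x | f₀ x < τ} = αe := by
    refine le_antisymm hlt_le ?_
    have hsplit : G τ = P₀ {x | f₀ x < τ} + P₀ {x | f₀ x = τ} := by
      have hd : {x | f₀ x ≤ τ} = {x | f₀ x < τ} ∪ {x | f₀ x = τ} := by
        ext x; simp only [mem_setOf_eq, mem_union]; exact le_iff_lt_or_eq
      rw [hG]
      simp only [hd]
      exact measure_union (fun s hs1 hs2 => by
        rintro x hx
        exact absurd (hs2 hx) (ne_of_lt (hs1 hx))) (hf (measurableSet_singleton τ))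
    rw [hsplit, hatom τ, add_zero] at hGτ
    exact hGτ
  -- U = Q ∩ {τ ≤ f₀}
  have hUeq : U = Q ∩ {x | τ ≤ f₀ x} := by
    rw [hU]
    ext x
    simp only [mem_setOf_eq, mem_inter_iff, sep_setOf, mem_Icc]
    refine and_congr_right fun _ => ?_
    rw [hp x, ← ENNReal.ofReal_le_iff_le_toReal (measure_ne_top _ _)]
    constructor
    · intro h
      exact sInf_le (by exact h : f₀ x ∈ S)
    · intro h
      rcases eq_or_lt_of_le h with h' | h'
      · show αe ≤ G (f₀ x)
        rw [← h']
        exact hGτ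
      · exact hmemS _ h'
  have hUm : MeasurableSet U := by
    rw [hUeq]; exact hIcc.inter (hf measurableSet_Ici)
  have hUsub : U ⊆ Q := by rw [hUeq]; exact inter_subset_left
  -- P₀ U = 1 - αe
  have hcompl : {x | τ ≤ f₀ x} = {x | f₀ x < τ}ᶜ := by
    ext x; simp [not_lt]
  have hPge : P₀ {x | τ ≤ f₀ x} = 1 - αe := by
    have hm2 : MeasurableSet {x | f₀ x < τ} := hf measurableSet_Iio
    rw [hcompl, measure_compl hm2 (measure_ne_top _ _), hflt, measure_univ]
  have hPU : P₀ U = 1 - αe := by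
    rw [hUeq, ← hPge]
    refine le_antisymm (measure_mono inter_subset_right) ?_
    calc P₀ {x | τ ≤ f₀ x} ≤ P₀ (Q ∩ {x | τ ≤ f₀ x} ∪ Qᶜ) := by
          refine measure_mono fun x hx => ?_
          by_cases hxQ : x ∈ Q
          · exact Or.inl ⟨hxQ, hx⟩
          · exact Or.inr hxQ
      _ ≤ P₀ (Q ∩ {x | τ ≤ f₀ x}) + P₀ Qᶜ := measure_union_le _ _
      _ = P₀ (Q ∩ {x | τ ≤ f₀ x}) := by rw [hnull, add_zero]
  have hofReal : ENNReal.ofReal (1 - α) = 1 - αe := by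
    rw [ENNReal.ofReal_sub 1 hα.1.le, ENNReal.ofReal_one]
  constructor
  · rw [hPU, hofReal]
  intro A hA hAsub hPA
  have hvolQ : volume Q ≠ ∞ := isCompact_Icc.measure_lt_top.ne
  have hfinUA : volume (U \ A) ≠ ∞ :=
    ((measure_mono (diff_subset.trans hUsub)).trans_lt (lt_top_iff_ne_top.2 hvolQ)).ne
  -- comparison of P₀ masses
  have hPU_le : P₀ (U \ A) ≤ P₀ (A \ U) := by
    have h1 : P₀ (U ∩ A) + P₀ (U \ A) = P₀ U := measure_inter_add_diff U hA
    have h2 : P₀ (A ∩ U) + P₀ (A \ U) = P₀ A := measure_inter_add_diff A hUm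
    have hUA : P₀ U ≤ P₀ A := by
      rw [hPU, ← hofReal]; exact hPA
    have hcomb : P₀ (U ∩ A) + P₀ (U \ A) ≤ P₀ (U ∩ A) + P₀ (A \ U) := by
      rw [h1, inter_comm U A, h2]; exact hUA
    exact (ENNReal.add_le_add_iff_left (measure_ne_top _ _)).mp hcomb
  -- density bounds
  have hb1 : τ * volume (U \ A) ≤ P₀ (U \ A) := by
    rw [hPs _ (hUm.diff hA) (diff_subset.trans hUsub)]
    have hpt : ∀ x ∈ U \ A, τ ≤ f₀ x := by
      intro x hx
      have := hUeq ▸ hx.1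
      exact this.2
    calc τ * volume (U \ A) = ∫⁻ _ in U \ A, τ ∂volume := (setLIntegral_const _ _).symm
      _ ≤ ∫⁻ x in U \ A, f₀ x ∂volume := setLIntegral_mono' (hUm.diff hA) hpt
  have hb2 : P₀ (A \ U) ≤ τ * volume (A \ U) := by
    rw [hPs _ (hA.diff hUm) (diff_subset.trans hAsub)]
    have hpt : ∀ x ∈ A \ U, f₀ x ≤ τ := by
      intro x hx
      have hxQ : x ∈ Q := hAsub hx.1
      have hxU : x ∉ U := hx.2
      rw [hUeq] at hxU
      have : ¬ τ ≤ f₀ x := fun h => hxU ⟨hxQ, h⟩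
      exact (not_le.mp this).le
    calc ∫⁻ x in A \ U, f₀ x ∂volume ≤ ∫⁻ _ in A \ U, τ ∂volume :=
          setLIntegral_mono' (hA.diff hUm) hpt
      _ = τ * volume (A \ U) := setLIntegral_const _ _
  have hmul : τ * volume (U \ A) ≤ τ * volume (A \ U) := hb1.trans (hPU_le.trans hb2)
  have hvol : volume (U \ A) ≤ volume (A \ U) :=
    (ENNReal.mul_le_mul_iff_right hτ0 hτ_lt.ne).mp hmul
  calc volume U = volume (U ∩ A) + volume (U \ A) := (measure_inter_add_diff U hA).symm
    _ ≤ volume (U ∩ A) + volume (A \ U) := add_le_add_right hvol _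
    _ = volume (A ∩ U) + volume (A \ U) := by rw [inter_comm]
    _ = volume A := measure_inter_add_diff A hUm
end

section
/- Let f_0 : ℝ^d → ℝ be C² with ‖∇f_0‖ ≤ λ everywhere and Hessian with eigenvalues bounded by λ_M. Then for any x and ε > 0, the average of f_0 over the Euclidean ball B_ε(x) differs from f_0(x) by at most (d/(d+1))λε + (d/(2(d+2)))λ_M ε². -/
open MeasureTheory

open Metric Set in

lemma int_norm_ball' {d : ℕ} (hd : 0 < d) {ε : ℝ} (hε : 0 < ε) :
    ∫ t in closedBall (0 : EuclideanSpace ℝ (Fin d)) ε, ‖t‖ =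
      (volume (closedBall (0 : EuclideanSpace ℝ (Fin d)) ε)).toReal * ((d : ℝ) / (d + 1) * ε) := by
  set E := EuclideanSpace ℝ (Fin d)
  have hrank : Module.finrank ℝ E = d := finrank_euclideanSpace_fin
  haveI : Nontrivial E := Module.nontrivial_of_finrank_pos (by rw [hrank]; exact hd)
  set f : ℝ → ℝ := (Icc (0:ℝ) ε).indicator id with hf
  have h1 : ∀ t : E, f ‖t‖ = (closedBall (0:E) ε).indicator (fun t => ‖t‖) t := by
    intro t
    simp only [hf, Set.indicator_apply, mem_Icc, mem_closedBall, dist_zero_right, norm_nonneg,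
      true_and, id]
    by_cases h : ‖t‖ ≤ ε
    · rw [if_pos ⟨norm_nonneg t, h⟩, indicator_of_mem (by simpa [mem_closedBall, dist_zero_right] using h)]
    · rw [if_neg (fun h' => h h'.2), indicator_of_notMem (by simpa [mem_closedBall, dist_zero_right] using h)]
  have h2 := integral_fun_norm_addHaar (volume : Measure E) f
  rw [show (fun x : E => f ‖x‖) = (closedBall (0:E) ε).indicator (fun t => ‖t‖) from funext h1,
    integral_indicator measurableSet_closedBall, hrank] at h2
  have h3 : ∫ y in Set.Ioi (0:ℝ), y ^ (d - 1) • f y = ε ^ (d + 1) / (d + 1) := by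
    have e1 : ∀ y : ℝ, y ^ (d-1) • f y = (Icc (0:ℝ) ε).indicator (fun y => y ^ (d-1) * y) y := by
      intro y
      by_cases h : y ∈ Icc (0:ℝ) ε
      · rw [hf, indicator_of_mem h, indicator_of_mem h]; simp
      · rw [hf, indicator_of_notMem h, indicator_of_notMem h]; simp
    have hset : Icc (0:ℝ) ε ∩ Ioi 0 = Ioc 0 ε := by
      ext y
      simp only [mem_inter_iff, mem_Icc, mem_Ioi, mem_Ioc]
      exact ⟨fun h => ⟨h.2, h.1.2⟩, fun h => ⟨⟨h.1.le, h.2⟩, h.1⟩⟩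
    have e2 : ∫ y in Ioc (0:ℝ) ε, y ^ (d-1) * y = ∫ y in Ioc (0:ℝ) ε, y ^ d :=
      setIntegral_congr_fun measurableSet_Ioc fun y _ => by rw [← pow_succ, Nat.sub_add_cancel hd]
    rw [show (fun y : ℝ => y ^ (d-1) • f y) = (Icc (0:ℝ) ε).indicator (fun y => y ^ (d-1) * y)
        from funext e1,
      integral_indicator measurableSet_Icc, Measure.restrict_restrict measurableSet_Icc, hset,
      e2, ← intervalIntegral.integral_of_le hε.le, integral_pow]
    simp
  rw [h2, h3, Measure.addHaar_closedBall volume 0 hε.le, hrank, ENNReal.toReal_mul,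
    ENNReal.toReal_ofReal (by positivity)]
  have hd1 : (d : ℝ) + 1 ≠ 0 := by positivity
  rw [nsmul_eq_mul, smul_eq_mul]
  field_simp
  rw [measureReal_def]; ring

open Metric Set in
/-- For f₀ C² with gradient bounded by l and Hessian bounded by lM, the average of f₀
over the ball B_ε(x) differs from f₀(x) by at most (d/(d+1))lε + (d/(2(d+2)))lM ε². -/
theorem stmt4 {d : ℕ} (f₀ : EuclideanSpace ℝ (Fin d) → ℝ)
    (hf : ContDiff ℝ 2 f₀) (l lM : ℝ)
    (hgrad : ∀ x, ‖gradient f₀ x‖ ≤ l)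
    (hhess : ∀ x, ‖iteratedFDeriv ℝ 2 f₀ x‖ ≤ lM)
    (x : EuclideanSpace ℝ (Fin d)) (ε : ℝ) (hε : 0 < ε) :
    |(⨍ t in Metric.closedBall (0 : EuclideanSpace ℝ (Fin d)) ε, f₀ (x + t)) - f₀ x| ≤
      ((d : ℝ) / (d + 1)) * l * ε + ((d : ℝ) / (2 * (d + 2))) * lM * ε ^ 2 := by
  have hl0 : 0 ≤ l := le_trans (norm_nonneg _) (hgrad x)
  have hlM0 : 0 ≤ lM := le_trans (norm_nonneg _) (hhess x)
  set B := Metric.closedBall (0 : EuclideanSpace ℝ (Fin d)) ε with hBdef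
  have hB0 : volume B ≠ 0 := (measure_closedBall_pos volume 0 hε).ne'
  have hBtop : volume B ≠ ⊤ := measure_closedBall_lt_top.ne
  have hsecond : 0 ≤ ((d : ℝ) / (2 * (d + 2))) * lM * ε ^ 2 := by positivity
  rcases Nat.eq_zero_or_pos d with hd | hd
  · subst hd
    haveI : Subsingleton (EuclideanSpace ℝ (Fin 0)) := by
      constructor; intro a b; ext i; exact absurd i.2 (by simp)
    have hconst : (fun t : EuclideanSpace ℝ (Fin 0) => f₀ (x + t)) = fun _ : EuclideanSpace ℝ (Fin 0) => f₀ x := by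
      funext t; rw [Subsingleton.elim t 0, add_zero]
    rw [show (⨍ t in B, f₀ (x + t)) = ⨍ _ in B, f₀ x from by rw [hconst],
      setAverage_const hB0 hBtop]
    simpa using hsecond
  -- main case
  have hv0 : (volume B).toReal ≠ 0 := ENNReal.toReal_ne_zero.2 ⟨hB0, hBtop⟩
  have hvpos : 0 < (volume B).toReal := lt_of_le_of_ne ENNReal.toReal_nonneg (Ne.symm hv0)
  have key : ∀ t : EuclideanSpace ℝ (Fin d), |f₀ (x + t) - f₀ x| ≤ l * ‖t‖ := by
    intro t
    have hb : ∀ y ∈ (Set.univ : Set (EuclideanSpace ℝ (Fin d))), ‖fderiv ℝ f₀ y‖ ≤ l := by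
      intro y _
      have : ‖gradient f₀ y‖ = ‖fderiv ℝ f₀ y‖ := by
        rw [gradient]; exact LinearIsometryEquiv.norm_map _ _
      rw [← this]; exact hgrad y
    have := convex_univ.norm_image_sub_le_of_norm_fderiv_le
      (fun y _ => ((hf.differentiable (by norm_num)) y) ) hb (Set.mem_univ x)
      (Set.mem_univ (x + t))
    simpa [Real.norm_eq_abs, add_sub_cancel_left] using this
  have hcont : Continuous fun t : EuclideanSpace ℝ (Fin d) => f₀ (x + t) :=
    hf.continuous.comp (continuous_const.add continuous_id)
  have hint1 : IntegrableOn (fun t : EuclideanSpace ℝ (Fin d) => f₀ (x + t)) B :=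
    hcont.continuousOn.integrableOn_compact (isCompact_closedBall 0 ε)
  have hintc : IntegrableOn (fun _ : EuclideanSpace ℝ (Fin d) => f₀ x) B :=
    integrableOn_const hBtop
  have hintsub : IntegrableOn (fun t : EuclideanSpace ℝ (Fin d) => f₀ (x + t) - f₀ x) B := hint1.sub hintc
  have hint2 : IntegrableOn (fun t : EuclideanSpace ℝ (Fin d) => l * ‖t‖) B :=
    (continuous_const.mul continuous_norm).continuousOn.integrableOn_compact
      (isCompact_closedBall 0 ε)
  rw [setAverage_eq, smul_eq_mul, measureReal_def]
  have hc : (volume B).toReal⁻¹ * (∫ t in B, f₀ (x + t)) - f₀ x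
      = (volume B).toReal⁻¹ * ∫ t in B, (f₀ (x + t) - f₀ x) := by
    rw [integral_sub hint1 hintc, setIntegral_const, smul_eq_mul, measureReal_def, mul_sub, ← mul_assoc,
      inv_mul_cancel₀ hv0, one_mul]
  rw [hc, abs_mul, abs_of_nonneg (inv_nonneg.2 ENNReal.toReal_nonneg)]
  have hbound : |∫ t in B, (f₀ (x + t) - f₀ x)| ≤ ∫ t in B, l * ‖t‖ := by
    refine le_trans ?_ (setIntegral_mono_on hintsub.abs hint2 measurableSet_closedBall
      fun t _ => key t)
    simpa [Real.norm_eq_abs] using norm_integral_le_integral_norm (μ := volume.restrict B) (fun t => f₀ (x + t) - f₀ x)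
  have hval : ∫ t in B, l * ‖t‖ = (volume B).toReal * ((d:ℝ) / (d+1) * ε) * l := by
    rw [integral_const_mul, int_norm_ball' hd hε]; ring
  calc (volume B).toReal⁻¹ * |∫ t in B, (f₀ (x + t) - f₀ x)|
      ≤ (volume B).toReal⁻¹ * ((volume B).toReal * ((d:ℝ) / (d+1) * ε) * l) := by
        refine mul_le_mul_of_nonneg_left (hbound.trans_eq hval) (by positivity)
    _ = ((d:ℝ) / (d+1)) * l * ε := by field_simp
    _ ≤ _ := le_add_of_nonneg_right hsecond
end

section
/- Let S₁, S₂ be independent samples from a density f_0 on [0,1]^d satisfying the smoothness conditions (gradient bounded by λ, Hessian eigenvalues bounded by λ_M), let η be fixed with f_0(η) > f_0(x₁), and let N_{S}(y) count the points of S within distance ε of y. Then with ε_m → 0 suitably and γ = 5/6, P(N_{S₂}(η) ≥ N_{S₁}(x₁)) → 1 as m → ∞. -/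
open MeasureTheory Filter Metric ProbabilityTheory
open scoped ENNReal Classical
set_option maxHeartbeats 1000000

lemma stmt6_density_upper {d : ℕ} (f₀ : EuclideanSpace ℝ (Fin d) → ℝ) (l : ℝ) (hl : 0 ≤ l)
    (lip : ∀ a b, |f₀ a - f₀ b| ≤ l * dist a b) (y : EuclideanSpace ℝ (Fin d)) (r : ℝ)
    (hr : 0 < r) (hy : 0 ≤ f₀ y) :
    ((volume.withDensity fun x => ENNReal.ofReal (f₀ x)) (closedBall y r)).toReal ≤
      (f₀ y + l * r) * (r ^ d * (volume (closedBall (0 : EuclideanSpace ℝ (Fin d)) 1)).toReal) := by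
  set c := volume (closedBall (0 : EuclideanSpace ℝ (Fin d)) 1) with hc
  have hcfin : c ≠ ⊤ := measure_closedBall_lt_top.ne
  have hB : MeasurableSet (closedBall y r) := measurableSet_closedBall
  have hvol : volume (closedBall y r) = ENNReal.ofReal (r ^ d) * c := by
    rw [Measure.addHaar_closedBall' _ _ hr.le, finrank_euclideanSpace_fin]
  have happ : (volume.withDensity fun x => ENNReal.ofReal (f₀ x)) (closedBall y r)
      = ∫⁻ x in closedBall y r, ENNReal.ofReal (f₀ x) := withDensity_apply _ hB
  have hle : (volume.withDensity fun x => ENNReal.ofReal (f₀ x)) (closedBall y r)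
      ≤ ENNReal.ofReal (f₀ y + l * r) * (ENNReal.ofReal (r ^ d) * c) := by
    rw [happ, ← hvol, ← setLIntegral_const]
    refine setLIntegral_mono measurable_const fun x hx => ENNReal.ofReal_le_ofReal ?_
    have h1 := lip x y
    have h2 : dist x y ≤ r := mem_closedBall.mp hx
    have := abs_le.mp h1
    nlinarith [mul_le_mul_of_nonneg_left h2 hl]
  have hfin : ENNReal.ofReal (f₀ y + l * r) * (ENNReal.ofReal (r ^ d) * c) ≠ ⊤ := by
    exact ENNReal.mul_ne_top ENNReal.ofReal_ne_top (ENNReal.mul_ne_top ENNReal.ofReal_ne_top hcfin)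
  calc ((volume.withDensity fun x => ENNReal.ofReal (f₀ x)) (closedBall y r)).toReal
      ≤ (ENNReal.ofReal (f₀ y + l * r) * (ENNReal.ofReal (r ^ d) * c)).toReal :=
        ENNReal.toReal_mono hfin hle
    _ = (f₀ y + l * r) * (r ^ d * c.toReal) := by
        rw [ENNReal.toReal_mul, ENNReal.toReal_mul, ENNReal.toReal_ofReal (by positivity),
          ENNReal.toReal_ofReal (by positivity)]

lemma stmt6_density_lower {d : ℕ} (f₀ : EuclideanSpace ℝ (Fin d) → ℝ) (hcont : Continuous f₀)
    (l : ℝ) (hl0 : 0 ≤ l) (lip : ∀ a b, |f₀ a - f₀ b| ≤ l * dist a b)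
    (y : EuclideanSpace ℝ (Fin d)) (r : ℝ)
    (hr : 0 < r) (hlow : 0 ≤ f₀ y - l * r) :
    (f₀ y - l * r) * (r ^ d * (volume (closedBall (0 : EuclideanSpace ℝ (Fin d)) 1)).toReal) ≤
      ((volume.withDensity fun x => ENNReal.ofReal (f₀ x)) (closedBall y r)).toReal := by
  set c := volume (closedBall (0 : EuclideanSpace ℝ (Fin d)) 1) with hc
  have hcfin : c ≠ ⊤ := measure_closedBall_lt_top.ne
  have hB : MeasurableSet (closedBall y r) := measurableSet_closedBall
  have hvol : volume (closedBall y r) = ENNReal.ofReal (r ^ d) * c := by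
    rw [Measure.addHaar_closedBall' _ _ hr.le, finrank_euclideanSpace_fin]
  have happ : (volume.withDensity fun x => ENNReal.ofReal (f₀ x)) (closedBall y r)
      = ∫⁻ x in closedBall y r, ENNReal.ofReal (f₀ x) := withDensity_apply _ hB
  have hy : 0 ≤ f₀ y := by nlinarith
  have hub : (volume.withDensity fun x => ENNReal.ofReal (f₀ x)) (closedBall y r)
      ≤ ENNReal.ofReal (f₀ y + l * r) * (ENNReal.ofReal (r ^ d) * c) := by
    rw [happ, ← hvol, ← setLIntegral_const]
    refine setLIntegral_mono measurable_const fun x hx => ENNReal.ofReal_le_ofReal ?_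
    have h1 := abs_le.mp (lip x y)
    have h2 : dist x y ≤ r := mem_closedBall.mp hx
    nlinarith [mul_le_mul_of_nonneg_left h2 hl0]
  have hfin : (volume.withDensity fun x => ENNReal.ofReal (f₀ x)) (closedBall y r) ≠ ⊤ :=
    ne_top_of_le_ne_top (ENNReal.mul_ne_top ENNReal.ofReal_ne_top
      (ENNReal.mul_ne_top ENNReal.ofReal_ne_top hcfin)) hub
  have hle : ENNReal.ofReal (f₀ y - l * r) * (ENNReal.ofReal (r ^ d) * c)
      ≤ (volume.withDensity fun x => ENNReal.ofReal (f₀ x)) (closedBall y r) := by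
    rw [happ, ← hvol, ← setLIntegral_const]
    refine setLIntegral_mono (ENNReal.measurable_ofReal.comp hcont.measurable)
      fun x hx => ENNReal.ofReal_le_ofReal ?_
    have h1 := abs_le.mp (lip x y)
    have h2 : dist x y ≤ r := mem_closedBall.mp hx
    nlinarith [mul_le_mul_of_nonneg_left h2 hl0]
  calc (f₀ y - l * r) * (r ^ d * c.toReal)
      = (ENNReal.ofReal (f₀ y - l * r) * (ENNReal.ofReal (r ^ d) * c)).toReal := by
        rw [ENNReal.toReal_mul, ENNReal.toReal_mul, ENNReal.toReal_ofReal hlow,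
          ENNReal.toReal_ofReal (by positivity)]
    _ ≤ _ := ENNReal.toReal_mono hfin hle

lemma stmt6_cheb {Ω α : Type*} [MeasurableSpace Ω] [MeasurableSpace α] (P : Measure Ω)
    [IsProbabilityMeasure P] (W : ℕ → Ω → α) (hW : ∀ i, Measurable (W i)) (m : ℕ)
    (hpair : ∀ i j, i ≠ j → IndepFun (W i) (W j) P)
    (μ : Measure α) (hlaw : ∀ i, P.map (W i) = μ) (s : Set α) (hs : MeasurableSet s)
    (t : ℝ) (ht : 0 < t) :
    P {ω | t ≤ |(∑ i ∈ Finset.range m, s.indicator (1 : α → ℝ) (W i ω)) - m * (μ s).toReal|}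
      ≤ ENNReal.ofReal (m * (μ s).toReal / t ^ 2) := by
  set g : α → ℝ := s.indicator 1 with hg_def
  have hg : Measurable g := measurable_one.indicator hs
  set Z : ℕ → Ω → ℝ := fun i ω => g (W i ω) with hZ_def
  have hZm : ∀ i, Measurable (Z i) := fun i => hg.comp (hW i)
  have h01 : ∀ i ω, Z i ω = 0 ∨ Z i ω = 1 := by
    intro i ω
    by_cases h : W i ω ∈ s <;> simp [hZ_def, hg_def, Set.indicator_apply, h]
  have hmem : ∀ i, MemLp (Z i) 2 P := fun i =>
    memLp_of_bounded (a := 0) (b := 1)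
      (Filter.Eventually.of_forall fun ω => by
        rcases h01 i ω with h | h <;> rw [h] <;> exact Set.mem_Icc.2 (by norm_num))
      (hZm i).aestronglyMeasurable 2
  have hexp : ∀ i, ∫ ω, Z i ω ∂P = (μ s).toReal := by
    intro i
    rw [hZ_def]
    simp only
    rw [← hlaw i, ← integral_map (hW i).aemeasurable]
    · exact integral_indicator_one hs
    · exact ((measurable_indicator_const_iff 1).2 hs).aestronglyMeasurable
  have hvar : ∀ i, variance (Z i) P ≤ (μ s).toReal := by
    intro i
    rw [← hexp i, variance_eq_sub (hmem i)]
    have h2 : ∫ ω, (Z i ^ 2) ω ∂P = ∫ ω, Z i ω ∂P := by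
      apply integral_congr_ae
      filter_upwards with ω
      rcases h01 i ω with h | h <;> simp [h]
    rw [h2]
    nlinarith [sq_nonneg (∫ ω, Z i ω ∂P)]
  set Sm : Ω → ℝ := ∑ i ∈ Finset.range m, Z i with hSm_def
  have hSmem : MemLp Sm 2 P := memLp_finset_sum' _ fun i _ => hmem i
  have hE : ∫ ω, Sm ω ∂P = m * (μ s).toReal := by
    rw [hSm_def]
    have : ∫ ω, (∑ i ∈ Finset.range m, Z i) ω ∂P = ∑ i ∈ Finset.range m, ∫ ω, Z i ω ∂P := by
      simp only [Finset.sum_apply]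
      exact integral_finset_sum _ fun i _ => (hmem i).integrable one_le_two
    rw [this]
    simp [hexp, Finset.sum_const]
  have hVar : variance Sm P ≤ m * (μ s).toReal := by
    rw [hSm_def, IndepFun.variance_sum (fun i _ => hmem i)
      (fun i _ j _ hij => ((hpair i j hij).comp hg hg))]
    calc ∑ i ∈ Finset.range m, variance (Z i) P ≤ ∑ i ∈ Finset.range m, (μ s).toReal :=
          Finset.sum_le_sum fun i _ => hvar i
      _ = m * (μ s).toReal := by simp [Finset.sum_const, mul_comm]
  have hcheb := meas_ge_le_variance_div_sq (μ := P) hSmem ht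
  have hset : {ω | t ≤ |(∑ i ∈ Finset.range m, s.indicator (1 : α → ℝ) (W i ω)) - m * (μ s).toReal|}
      = {ω | t ≤ |Sm ω - ∫ ω, Sm ω ∂P|} := by
    have hE' : ∫ ω, (∑ c ∈ Finset.range m, Z c ω) ∂P = (m : ℝ) * (μ s).toReal := by
      rw [← hE]
      exact integral_congr_ae (by filter_upwards with ω; simp [hSm_def, Finset.sum_apply])
    ext ω
    simp only [Set.mem_setOf_eq, hSm_def, Finset.sum_apply, hE']
    rfl
  rw [hset]
  refine hcheb.trans (ENNReal.ofReal_le_ofReal ?_)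
  gcongr

/-- For independent samples S₁, S₂ of size m from a smooth density f₀, a fixed point η
with f₀(η) > f₀(x₁), and ε-neighbor counts N_S, with ε_m → 0 suitably and γ = 5/6,
P(N_{S₂}(η) ≥ N_{S₁}(x₁)) → 1 as m → ∞. -/
theorem stmt6 {d : ℕ} (f₀ : EuclideanSpace ℝ (Fin d) → ℝ)
    (hf : ContDiff ℝ 2 f₀) (hf0 : ∀ x, 0 ≤ f₀ x) (l lM : ℝ)
    (hgrad : ∀ x, ‖gradient f₀ x‖ ≤ l)
    (hhess : ∀ x, ‖iteratedFDeriv ℝ 2 f₀ x‖ ≤ lM)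
    (P₀ : Measure (EuclideanSpace ℝ (Fin d))) [IsProbabilityMeasure P₀]
    (hP₀ : P₀ = volume.withDensity (fun x => ENNReal.ofReal (f₀ x)))
    (η x₁ : EuclideanSpace ℝ (Fin d)) (hgt : f₀ x₁ < f₀ η)
    {Ω : Type*} [MeasurableSpace Ω] (P : Measure Ω) [IsProbabilityMeasure P]
    (X Y : ℕ → Ω → EuclideanSpace ℝ (Fin d))
    (hmX : ∀ i, Measurable (X i)) (hmY : ∀ i, Measurable (Y i))
    (hindep : ProbabilityTheory.iIndepFun
      (Sum.elim X Y) P)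
    (hlawX : ∀ i, P.map (X i) = P₀) (hlawY : ∀ i, P.map (Y i) = P₀)
    (γ : ℝ) (hγ : γ = 5/6) (ε : ℕ → ℝ) (hεpos : ∀ m, 0 < ε m)
    (hε0 : Tendsto ε atTop (nhds 0))
    (hεgrow : Tendsto (fun m : ℕ => (m : ℝ) * ε m ^ d * (m : ℝ) ^ (2 * γ - 2))
      atTop atTop) :
    Tendsto (fun m : ℕ =>
        P {ω | ((Finset.range m).filter fun i => dist (X i ω) x₁ ≤ ε m).card ≤
               ((Finset.range m).filter fun i => dist (Y i ω) η ≤ ε m).card})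
      atTop (nhds 1) := by
  classical
  have hl : 0 ≤ l := le_trans (norm_nonneg _) (hgrad x₁)
  have hcont : Continuous f₀ := hf.continuous
  have lip : ∀ a b, |f₀ a - f₀ b| ≤ l * dist a b := by
    intro a b
    have hdf : ∀ x, ‖fderiv ℝ f₀ x‖ ≤ l := fun x => by
      have := hgrad x; rwa [gradient, LinearIsometryEquiv.norm_map] at this
    rw [dist_eq_norm]
    have := Convex.norm_image_sub_le_of_norm_fderiv_le
      (fun x _ => (hf.differentiable (by norm_num)).differentiableAt) (fun x _ => hdf x)
      convex_univ (Set.mem_univ b) (Set.mem_univ a)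
    rwa [Real.norm_eq_abs] at this
  set cR : ℝ := (volume (closedBall (0 : EuclideanSpace ℝ (Fin d)) 1)).toReal with hcR
  have hcRpos : 0 < cR := ENNReal.toReal_pos
    (lt_of_lt_of_le (measure_ball_pos _ _ one_pos) (measure_mono ball_subset_closedBall)).ne'
    measure_closedBall_lt_top.ne
  have hΔpos : 0 < f₀ η - f₀ x₁ := sub_pos.2 hgt
  set Δ : ℝ := f₀ η - f₀ x₁ with hΔ
  set K : ℝ := max (f₀ x₁) (f₀ η) + l with hK
  have hKpos : 0 < K + 1 := by
    have := hf0 x₁; have : (0:ℝ) ≤ max (f₀ x₁) (f₀ η) := le_max_of_le_left (hf0 x₁)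
    simp only [hK]; linarith
  have hK0 : 0 ≤ K := by
    have : (0:ℝ) ≤ max (f₀ x₁) (f₀ η) := le_max_of_le_left (hf0 x₁)
    simp only [hK]; linarith
  -- the success sets
  set S : ℕ → Set Ω := fun m =>
    {ω | ((Finset.range m).filter fun i => dist (X i ω) x₁ ≤ ε m).card ≤
      ((Finset.range m).filter fun i => dist (Y i ω) η ≤ ε m).card} with hS
  -- measurability
  have hmN : ∀ (W : ℕ → Ω → EuclideanSpace ℝ (Fin d)), (∀ i, Measurable (W i)) →
      ∀ (z : EuclideanSpace ℝ (Fin d)) (m : ℕ),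
      Measurable (fun ω => ((Finset.range m).filter fun i => dist (W i ω) z ≤ ε m).card) := by
    intro W hW z m
    have h1 : (fun ω => ((Finset.range m).filter fun i => dist (W i ω) z ≤ ε m).card)
        = fun ω => ∑ i ∈ Finset.range m, if dist (W i ω) z ≤ ε m then 1 else 0 := by
      funext ω; rw [Finset.card_filter]
    rw [h1]
    refine Finset.measurable_sum _ fun i _ => Measurable.ite ?_ measurable_const measurable_const
    exact (hW i) measurableSet_closedBall
  have hSmeas : ∀ m, MeasurableSet (S m) :=
    fun m => measurableSet_le (hmN X hmX x₁ m) (hmN Y hmY η m)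
  -- pairwise independence
  have hpairX : ∀ i j, i ≠ j → IndepFun (X i) (X j) P := fun i j hij => by
    have := hindep.indepFun (i := Sum.inl i) (j := Sum.inl j) (by simpa using hij)
    simpa using this
  have hpairY : ∀ i j, i ≠ j → IndepFun (Y i) (Y j) P := fun i j hij => by
    have := hindep.indepFun (i := Sum.inr i) (j := Sum.inr j) (by simpa using hij)
    simpa using this
  -- card as indicator sums
  have hcard : ∀ (W : ℕ → Ω → EuclideanSpace ℝ (Fin d)) (z : EuclideanSpace ℝ (Fin d))
      (m : ℕ) (ω : Ω),
      ((((Finset.range m).filter fun i => dist (W i ω) z ≤ ε m).card : ℕ) : ℝ)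
        = ∑ i ∈ Finset.range m, (closedBall z (ε m)).indicator
            (1 : EuclideanSpace ℝ (Fin d) → ℝ) (W i ω) := by
    intro W z m ω
    rw [Finset.card_filter]
    push_cast
    refine Finset.sum_congr rfl fun i _ => ?_
    by_cases h : dist (W i ω) z ≤ ε m <;> simp [Set.indicator_apply, mem_closedBall, h]
  -- growth of m * ε^d
  have hMV : Tendsto (fun m : ℕ => (m : ℝ) * ε m ^ d) atTop atTop := by
    refine tendsto_atTop_mono' atTop ?_ hεgrow
    filter_upwards [eventually_ge_atTop 1] with m hm
    have hm1 : (1:ℝ) ≤ (m:ℝ) := by exact_mod_cast hm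
    have hexp : (m:ℝ) ^ (2 * γ - 2) ≤ 1 :=
      Real.rpow_le_one_of_one_le_of_nonpos hm1 (by rw [hγ]; norm_num)
    have h0 : 0 ≤ (m:ℝ) * ε m ^ d := mul_nonneg (Nat.cast_nonneg m) (pow_pos (hεpos m) d).le
    nlinarith
  -- the bound sequence
  set C : ℝ := 32 * (K : ℝ) / (Δ ^ 2 * cR) with hC
  set b : ℕ → ℝ≥0∞ := fun m => ENNReal.ofReal (C / ((m:ℝ) * ε m ^ d)) with hb
  have hb0 : Tendsto b atTop (nhds 0) := by
    have h1 : Tendsto (fun m : ℕ => C / ((m:ℝ) * ε m ^ d)) atTop (nhds 0) :=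
      Tendsto.div_atTop tendsto_const_nhds hMV
    have h2 := (ENNReal.tendsto_ofReal h1)
    simpa [hb] using h2
  -- main eventual bound
  have key : ∀ᶠ m in atTop, P ((S m)ᶜ) ≤ b m := by
    have hev1 : ∀ᶠ m in atTop, ε m < 1 := hε0.eventually_lt_const one_pos
    have hev2 : ∀ᶠ m in atTop, l * ε m < Δ / 4 := by
      have : Tendsto (fun m => l * ε m) atTop (nhds 0) := by
        simpa using hε0.const_mul l
      exact this.eventually_lt_const (by linarith)
    filter_upwards [eventually_ge_atTop 1, hev1, hev2] with m hm1 hε1 hlε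
    have hm1' : (1:ℝ) ≤ (m:ℝ) := by exact_mod_cast hm1
    set r : ℝ := ε m with hrdef
    have hr : 0 < r := hεpos m
    have hv : 0 < r ^ d * cR := by positivity
    set p₁ : ℝ := (P₀ (closedBall x₁ r)).toReal with hp₁
    set p₂ : ℝ := (P₀ (closedBall η r)).toReal with hp₂
    have hp₁up : p₁ ≤ (f₀ x₁ + l * r) * (r ^ d * cR) := by
      rw [hp₁, hP₀]; exact stmt6_density_upper f₀ l hl lip x₁ r hr (hf0 x₁)
    have hp₂up : p₂ ≤ (f₀ η + l * r) * (r ^ d * cR) := by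
      rw [hp₂, hP₀]; exact stmt6_density_upper f₀ l hl lip η r hr (hf0 η)
    have hlow : 0 ≤ f₀ η - l * r := by
      have := hf0 x₁; simp only [hΔ] at hlε ⊢; linarith
    have hp₂low : (f₀ η - l * r) * (r ^ d * cR) ≤ p₂ := by
      rw [hp₂, hP₀]; exact stmt6_density_lower f₀ hcont l hl lip η r hr hlow
    have hp₁0 : 0 ≤ p₁ := ENNReal.toReal_nonneg
    have hp₂0 : 0 ≤ p₂ := ENNReal.toReal_nonneg
    have hδ : Δ / 2 * (r ^ d * cR) ≤ p₂ - p₁ := by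
      have h := sub_le_sub hp₂low hp₁up
      have : (f₀ η - l * r) * (r ^ d * cR) - (f₀ x₁ + l * r) * (r ^ d * cR)
          = (Δ - 2 * (l * r)) * (r ^ d * cR) := by simp only [hΔ]; ring
      rw [this] at h
      refine le_trans ?_ h
      have : Δ / 2 ≤ Δ - 2 * (l * r) := by linarith
      nlinarith
    have hKp₁ : p₁ ≤ K * (r ^ d * cR) := by
      refine hp₁up.trans ?_
      have : f₀ x₁ + l * r ≤ K := by
        have h1 : f₀ x₁ ≤ max (f₀ x₁) (f₀ η) := le_max_left _ _
        have h2 : l * r ≤ l := by nlinarith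
        simp only [hK]; linarith
      nlinarith
    have hKp₂ : p₂ ≤ K * (r ^ d * cR) := by
      refine hp₂up.trans ?_
      have : f₀ η + l * r ≤ K := by
        have h1 : f₀ η ≤ max (f₀ x₁) (f₀ η) := le_max_right _ _
        have h2 : l * r ≤ l := by nlinarith
        simp only [hK]; linarith
      nlinarith
    set t : ℝ := (m : ℝ) * (p₂ - p₁) / 2 with ht_def
    have hm0 : (0:ℝ) < (m:ℝ) := lt_of_lt_of_le one_pos hm1'
    have hδpos : 0 < p₂ - p₁ :=
      lt_of_lt_of_le (by nlinarith : (0:ℝ) < Δ / 2 * (r ^ d * cR)) hδ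
    have htpos : 0 < t := by
      rw [ht_def]; exact div_pos (mul_pos hm0 hδpos) two_pos
    have hch₁ := stmt6_cheb P X hmX m hpairX P₀ hlawX (closedBall x₁ r)
      measurableSet_closedBall t htpos
    have hch₂ := stmt6_cheb P Y hmY m hpairY P₀ hlawY (closedBall η r)
      measurableSet_closedBall t htpos
    -- inclusion into deviation events
    have hsub : (S m)ᶜ ⊆
        {ω | t ≤ |(∑ i ∈ Finset.range m, (closedBall x₁ r).indicator
            (1 : EuclideanSpace ℝ (Fin d) → ℝ) (X i ω)) - m * p₁|} ∪
        {ω | t ≤ |(∑ i ∈ Finset.range m, (closedBall η r).indicator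
            (1 : EuclideanSpace ℝ (Fin d) → ℝ) (Y i ω)) - m * p₂|} := by
      intro ω hω
      by_contra hnot
      simp only [Set.mem_union, Set.mem_setOf_eq, not_or, not_le] at hnot
      obtain ⟨h1, h2⟩ := hnot
      apply hω
      simp only [hS, Set.mem_setOf_eq]
      have e1 := hcard X x₁ m ω
      have e2 := hcard Y η m ω
      have hlt : ((((Finset.range m).filter fun i => dist (X i ω) x₁ ≤ ε m).card : ℕ) : ℝ)
          < ((((Finset.range m).filter fun i => dist (Y i ω) η ≤ ε m).card : ℕ) : ℝ) := by
        rw [e1, e2]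
        have a1 := abs_lt.mp h1
        have a2 := abs_lt.mp h2
        have : (m:ℝ) * p₁ + t = (m:ℝ) * p₂ - t := by rw [ht_def]; ring
        linarith [a1.2, a2.1]
      exact_mod_cast hlt.le
    have ht' : (m:ℝ) * Δ * (r ^ d * cR) / 4 ≤ t := by
      rw [ht_def]
      have := mul_le_mul_of_nonneg_left hδ (by positivity : (0:ℝ) ≤ (m:ℝ))
      linarith
    have ht'pos : 0 < (m:ℝ) * Δ * (r ^ d * cR) / 4 :=
      div_pos (mul_pos (mul_pos hm0 hΔpos) hv) (by norm_num)
    have hmne : (m:ℝ) ≠ 0 := hm0.ne'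
    have hΔne : Δ ≠ 0 := hΔpos.ne'
    have hcRne : cR ≠ 0 := hcRpos.ne'
    have hrdne : r ^ d ≠ 0 := by positivity
    have hratio : ∀ p : ℝ, 0 ≤ p → p ≤ K * (r ^ d * cR) →
        (m:ℝ) * p / t ^ 2 ≤ 16 * K / (Δ ^ 2 * cR) / ((m:ℝ) * r ^ d) := by
      intro p hp0 hpK
      have h1 : (m:ℝ) * p / t ^ 2 ≤ ((m:ℝ) * (K * (r ^ d * cR))) /
          (((m:ℝ) * Δ * (r ^ d * cR) / 4) ^ 2) := by
        refine div_le_div₀ (by nlinarith : (0:ℝ) ≤ (m:ℝ) * (K * (r ^ d * cR)))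
          (mul_le_mul_of_nonneg_left hpK hm0.le) (pow_pos ht'pos 2) ?_
        exact pow_le_pow_left₀ ht'pos.le ht' 2
      refine h1.trans_eq ?_
      have hεd : (0:ℝ) < r ^ d := by positivity
      field_simp
      ring
    calc P ((S m)ᶜ)
        ≤ P ({ω | t ≤ |(∑ i ∈ Finset.range m, (closedBall x₁ r).indicator
            (1 : EuclideanSpace ℝ (Fin d) → ℝ) (X i ω)) - m * p₁|} ∪
          {ω | t ≤ |(∑ i ∈ Finset.range m, (closedBall η r).indicator
            (1 : EuclideanSpace ℝ (Fin d) → ℝ) (Y i ω)) - m * p₂|}) := measure_mono hsub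
      _ ≤ ENNReal.ofReal ((m:ℝ) * p₁ / t ^ 2) + ENNReal.ofReal ((m:ℝ) * p₂ / t ^ 2) :=
          le_trans (measure_union_le _ _) (add_le_add hch₁ hch₂)
      _ ≤ b m := by
          rw [hb, ← ENNReal.ofReal_add (by positivity) (by positivity)]
          refine ENNReal.ofReal_le_ofReal ?_
          have r₁ := hratio p₁ hp₁0 hKp₁
          have r₂ := hratio p₂ hp₂0 hKp₂
          have : C / ((m:ℝ) * ε m ^ d) = 16 * K / (Δ ^ 2 * cR) / ((m:ℝ) * r ^ d)
              + 16 * K / (Δ ^ 2 * cR) / ((m:ℝ) * r ^ d) := by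
            rw [hC, hrdef]; ring
          rw [this]
          exact add_le_add r₁ r₂
  -- conclude
  have h0 : Tendsto (fun m => P ((S m)ᶜ)) atTop (nhds 0) :=
    tendsto_of_tendsto_of_tendsto_of_le_of_le' tendsto_const_nhds hb0
      (Eventually.of_forall fun m => zero_le) key
  have hfinal : Tendsto (fun m => 1 - P ((S m)ᶜ)) atTop (nhds 1) := by
    have := ENNReal.Tendsto.sub (tendsto_const_nhds :
      Tendsto (fun _ : ℕ => (1:ℝ≥0∞)) atTop (nhds 1)) h0 (Or.inl ENNReal.one_ne_top)
    simpa using this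
  refine hfinal.congr fun m => ?_
  rw [← prob_compl_eq_one_sub (hSmeas m).compl, compl_compl]
end

section
/- Let L be a non-negative, non-increasing, convex loss differentiable at 0 with L'(0) < 0, and let D(r_i, r_j) > 0 be weights. If g minimizes the expected weighted pairwise risk E[Σ_{(i,j): r_i > r_j} D(r_i,r_j) L(g(x_i) − g(x_j))] over a function class H closed under coordinate swaps, then g cannot have g(x_i) < g(x_j) whenever the true ranks satisfy r_i > r_j: a contradiction arises from swapping the values of g at x_i and x_j, which strictly decreases the risk. -/
/-- If L is a non-negative, non-increasing, convex surrogate loss differentiable at 0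
with L'(0) < 0, D positive weights, and g minimizes the weighted pairwise risk over
all functions, then g ranks the samples according to their ranks:
r_i > r_j implies g(x_i) > g(x_j). -/
theorem stmt14 {X : Type*} (L : ℝ → ℝ)
    (hL0 : ∀ t, 0 ≤ L t) (hLanti : Antitone L)
    (hLconv : ConvexOn ℝ Set.univ L)
    (hLdiff : DifferentiableAt ℝ L 0) (hL' : deriv L 0 < 0)
    (D : ℝ → ℝ → ℝ) (hD : ∀ a b, 0 < D a b)
    (n : ℕ) (x : Fin n → X) (hx : Function.Injective x)
    (r : Fin n → ℝ)
    (Risk : (X → ℝ) → ℝ)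
    (hRisk : ∀ g : X → ℝ, Risk g = ∑ i : Fin n, ∑ j : Fin n,
      if r j < r i then D (r i) (r j) * L (g (x i) - g (x j)) else 0)
    (g : X → ℝ) (hmin : ∀ g' : X → ℝ, Risk g ≤ Risk g') :
    ∀ i j : Fin n, r j < r i → g (x j) < g (x i) := by
  intro i j hij
  by_contra hg
  push_neg at hg   -- hg : g (x i) ≤ g (x j)
  -- the infimum of L
  set ℓ : ℝ := sInf (Set.range L) with hℓdef
  have hbdd : BddBelow (Set.range L) := ⟨0, by rintro y ⟨t, rfl⟩; exact hL0 t⟩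
  have hℓle : ∀ t, ℓ ≤ L t := fun t => csInf_le hbdd ⟨t, rfl⟩
  have hℓ0 : ℓ < L 0 := by
    by_contra h
    push_neg at h
    have h' : ∀ t, L 0 ≤ L t := fun t => le_trans h (hℓle t)
    have hmin0 : IsLocalMin L 0 := Filter.Eventually.of_forall h'
    have := hmin0.deriv_eq_zero
    linarith
  -- total weight
  set S : ℝ := ∑ k : Fin n, ∑ l : Fin n, if r l < r k then D (r k) (r l) else 0 with hSdef
  have hSpos : 0 < S := by
    apply Finset.sum_pos'
    · intro k _
      apply Finset.sum_nonneg
      intro l _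
      split <;> [exact le_of_lt (hD _ _); exact le_rfl]
    · refine ⟨i, Finset.mem_univ i, ?_⟩
      apply Finset.sum_pos'
      · intro l _
        split <;> [exact le_of_lt (hD _ _); exact le_rfl]
      · exact ⟨j, Finset.mem_univ j, by simp [hij, hD]⟩
  -- Claim A : Risk g ≤ S * ℓ
  have hA : Risk g ≤ S * ℓ := by
    apply le_of_forall_pos_le_add
    intro ε hε
    set δ : ℝ := ε / S with hδdef
    have hδpos : 0 < δ := div_pos hε hSpos
    -- pick t0 with L t0 < ℓ + δ
    have hlt : sInf (Set.range L) < ℓ + δ := by rw [← hℓdef]; linarith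
    obtain ⟨y, ⟨t0, rfl⟩, ht0⟩ := exists_lt_of_csInf_lt (Set.range_nonempty L) hlt
    -- pick M dominating t0 / gaps
    obtain ⟨M, hM⟩ := ((Finset.univ : Finset (Fin n × Fin n)).image
      (fun p => t0 / (r p.1 - r p.2))).exists_le
    have hMgap : ∀ k l : Fin n, r l < r k → t0 ≤ M * (r k - r l) := by
      intro k l hkl
      have hgap : 0 < r k - r l := by linarith
      have : t0 / (r k - r l) ≤ M :=
        hM _ (Finset.mem_image.2 ⟨(k, l), Finset.mem_univ _, rfl⟩)
      rw [div_le_iff₀ hgap] at this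
      linarith [this]
    set g' : X → ℝ := Function.extend x (fun k => M * r k) (fun _ => 0) with hg'def
    have hg'x : ∀ k, g' (x k) = M * r k := fun k => hx.extend_apply _ _ k
    have hbound : Risk g' ≤ S * (ℓ + δ) := by
      have hstep : ∑ k : Fin n, ∑ l : Fin n,
          (if r l < r k then D (r k) (r l) * L (g' (x k) - g' (x l)) else 0)
          ≤ ∑ k : Fin n, ∑ l : Fin n,
          (if r l < r k then D (r k) (r l) * (ℓ + δ) else 0) := by
        apply Finset.sum_le_sum
        intro k _
        apply Finset.sum_le_sum
        intro l _
        split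
        · rename_i hkl
          have harg : g' (x k) - g' (x l) = M * (r k - r l) := by
            rw [hg'x, hg'x]; ring
          have hLle : L (g' (x k) - g' (x l)) ≤ ℓ + δ := by
            rw [harg]
            exact le_trans (hLanti (hMgap k l hkl)) (le_of_lt ht0)
          exact mul_le_mul_of_nonneg_left hLle (le_of_lt (hD _ _))
        · exact le_rfl
      have heq : ∑ k : Fin n, ∑ l : Fin n,
          (if r l < r k then D (r k) (r l) * (ℓ + δ) else 0) = S * (ℓ + δ) := by
        rw [hSdef, Finset.sum_mul]
        apply Finset.sum_congr rfl
        intro k _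
        rw [Finset.sum_mul]
        apply Finset.sum_congr rfl
        intro l _
        split <;> simp
      calc Risk g' = _ := hRisk g'
        _ ≤ _ := hstep
        _ = S * (ℓ + δ) := heq
    have hfin : S * (ℓ + δ) = S * ℓ + ε := by
      rw [mul_add, hδdef, mul_div_cancel₀ _ (ne_of_gt hSpos)]
    calc Risk g ≤ Risk g' := hmin g'
      _ ≤ S * (ℓ + δ) := hbound
      _ = S * ℓ + ε := hfin
  -- Claim B : S * ℓ + D (r i) (r j) * (L 0 - ℓ) ≤ Risk g
  have hB : S * ℓ + D (r i) (r j) * (L 0 - ℓ) ≤ Risk g := by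
    rw [hRisk]
    have key : ∀ k l : Fin n,
        (if r l < r k then D (r k) (r l) * ℓ else 0)
          + (if k = i ∧ l = j then D (r i) (r j) * (L 0 - ℓ) else 0)
        ≤ (if r l < r k then D (r k) (r l) * L (g (x k) - g (x l)) else 0) := by
      intro k l
      by_cases hkl : k = i ∧ l = j
      · obtain ⟨rfl, rfl⟩ := hkl
        simp only [hij, if_pos, and_self]
        have h1 : g (x k) - g (x l) ≤ 0 := by linarith
        have h2 : L 0 ≤ L (g (x k) - g (x l)) := hLanti h1
        have h3 : D (r k) (r l) * L 0 ≤ D (r k) (r l) * L (g (x k) - g (x l)) :=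
          mul_le_mul_of_nonneg_left h2 (le_of_lt (hD _ _))
        nlinarith [hD (r k) (r l)]
      · rw [if_neg hkl, add_zero]
        split
        · exact mul_le_mul_of_nonneg_left (hℓle _) (le_of_lt (hD _ _))
        · exact le_rfl
    have hsum := Finset.sum_le_sum (fun k (_ : k ∈ Finset.univ) =>
      Finset.sum_le_sum (fun l (_ : l ∈ Finset.univ) => key k l))
    have hsplit : ∑ k : Fin n, ∑ l : Fin n,
        ((if r l < r k then D (r k) (r l) * ℓ else 0)
          + (if k = i ∧ l = j then D (r i) (r j) * (L 0 - ℓ) else 0))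
        = S * ℓ + D (r i) (r j) * (L 0 - ℓ) := by
      rw [show S * ℓ = ∑ k : Fin n, ∑ l : Fin n,
          (if r l < r k then D (r k) (r l) * ℓ else 0) by
        rw [hSdef, Finset.sum_mul]
        apply Finset.sum_congr rfl; intro k _
        rw [Finset.sum_mul]
        apply Finset.sum_congr rfl; intro l _
        split <;> simp]
      simp only [Finset.sum_add_distrib]
      congr 1
      simp [Finset.sum_ite_eq', ite_and]
    linarith [hsum, le_of_eq hsplit.symm]
  have hc : 0 < D (r i) (r j) * (L 0 - ℓ) :=
    mul_pos (hD _ _) (by linarith)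
  linarith
end

section
/- Vapnik's symmetrization inequality: let S be a system of measurable subsets of a set X, P a probability measure, and ν_x(A) = |x ∩ A|/n the empirical frequency on a sample x of size n. If n > 2/ε, then P^n{ x : sup_{A∈S} |ν_x(A) − P(A)| > ε } ≤ 2 P^{2n}{ (x,x') : sup_{A∈S} |ν_x(A) − ν_{x'}(A)| > ε/2 }. -/
set_option maxHeartbeats 1000000

open MeasureTheory
open scoped ENNReal Classical

/- ### Combinatorial counting function -/

private noncomputable def cntf {X : Type*} (A : Set X) {n : ℕ} (x : Fin n → X) : ℕ :=
  (Finset.univ.filter fun i => x i ∈ A).card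

private lemma cntf_succ {X : Type*} (A : Set X) {n : ℕ} (x : Fin (n+1) → X) :
    cntf A x = (if x 0 ∈ A then 1 else 0) + cntf A (fun j => x j.succ) := by
  unfold cntf
  rw [Finset.card_filter, Finset.card_filter, Fin.sum_univ_succ]

private lemma cntf_le {X : Type*} (A : Set X) {n : ℕ} (x : Fin n → X) : cntf A x ≤ n := by
  have := Finset.card_filter_le (Finset.univ : Finset (Fin n)) (fun i => x i ∈ A)
  simpa [cntf] using this

private lemma measurable_cntf {X : Type*} [MeasurableSpace X] {A : Set X}
    (hA : MeasurableSet A) {n : ℕ} : Measurable (fun x : Fin n → X => cntf A x) := by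
  unfold cntf
  simp_rw [Finset.card_filter]
  refine Finset.measurable_sum _ (fun i _ => ?_)
  have h : Measurable (fun a : X => if a ∈ A then (1:ℕ) else 0) :=
    Measurable.piecewise hA measurable_const measurable_const
  exact h.comp (measurable_pi_apply i)

/- ### Real binomial sums -/

private noncomputable def Fsum (n : ℕ) (p : ℝ) (m : ℕ) : ℝ :=
  ∑ k ∈ Finset.range (m+1), (n.choose k : ℝ) * p^k * (1-p)^(n-k)

private noncomputable def Tsum (n : ℕ) (p : ℝ) (k : ℕ) : ℝ :=
  ∑ j ∈ Finset.Icc k n, (n.choose j : ℝ) * p^j * (1-p)^(n-j)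

private lemma Fsum_nonneg {n m : ℕ} {p : ℝ} (h0 : 0 ≤ p) (h1 : p ≤ 1) : 0 ≤ Fsum n p m := by
  refine Finset.sum_nonneg (fun k _ => ?_)
  have : (0:ℝ) ≤ 1 - p := by linarith
  positivity

private lemma Fsum_total {n m : ℕ} (p : ℝ) (h : n ≤ m) : Fsum n p m = 1 := by
  have hsub : Finset.range (n+1) ⊆ Finset.range (m+1) := Finset.range_subset_range.mpr (by omega)
  have h1 : Fsum n p m = ∑ k ∈ Finset.range (n+1), (n.choose k : ℝ) * p^k * (1-p)^(n-k) := by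
    unfold Fsum
    refine (Finset.sum_subset hsub (fun k hk hk2 => ?_)).symm
    simp only [Finset.mem_range] at hk hk2
    have : n < k := by omega
    simp [Nat.choose_eq_zero_of_lt this]
  have h2 := add_pow p (1-p) n
  have h3 : p + (1-p) = 1 := by ring
  rw [h3, one_pow] at h2
  rw [h1]
  exact Eq.trans (Finset.sum_congr rfl (fun k _ => by ring)) h2.symm

private lemma Fsum_add_Tsum {n k : ℕ} (p : ℝ) (hk1 : 1 ≤ k) (hkn : k ≤ n) :
    Fsum n p (k-1) + Tsum n p k = 1 := by
  have hk : (k-1)+1 = k := by omega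
  have h : Fsum n p n = Fsum n p (k-1) + Tsum n p k := by
    unfold Fsum Tsum
    rw [hk, ← Finset.Ico_add_one_right_eq_Icc, Finset.range_eq_Ico, Finset.range_eq_Ico]
    exact (Finset.sum_Ico_consecutive _ (Nat.zero_le k) (by omega : k ≤ n+1)).symm
  rw [← h, Fsum_total p le_rfl]

private lemma Fsum_eq_Tsum {n m : ℕ} (p : ℝ) (h : m ≤ n) :
    Fsum n p m = Tsum n (1-p) (n-m) := by
  unfold Fsum Tsum
  refine Finset.sum_nbij' (fun k => n - k) (fun j => n - j) ?_ ?_ ?_ ?_ ?_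
  · intro k hk; simp only [Finset.mem_range] at hk; simp only [Finset.mem_Icc]; omega
  · intro j hj; simp only [Finset.mem_Icc] at hj; simp only [Finset.mem_range]; omega
  · intro k hk; simp only [Finset.mem_range] at hk; show n - (n - k) = k; omega
  · intro j hj; simp only [Finset.mem_Icc] at hj; show n - (n - j) = j; omega
  · intro k hk
    simp only [Finset.mem_range] at hk
    have hkn : k ≤ n := by omega
    rw [Nat.choose_symm hkn, sub_sub_cancel, Nat.sub_sub_self hkn]
    ring

/- ### Distribution of the count under the product measure -/

private lemma pmf_cnt {X : Type*} [MeasurableSpace X] (P : Measure X) [IsProbabilityMeasure P]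
    {A : Set X} (hA : MeasurableSet A) (n : ℕ) (k : ℕ) :
    (Measure.pi fun _ : Fin n => P) {x | cntf A x = k}
      = ENNReal.ofReal ((n.choose k : ℝ) * (P A).toReal ^ k * (1 - (P A).toReal) ^ (n - k)) := by
  induction n generalizing k with
  | zero =>
    cases k with
    | zero =>
      have : {x : Fin 0 → X | cntf A x = 0} = Set.univ := by
        ext x; simp [cntf]
      rw [this, measure_univ]
      norm_num
    | succ k =>
      have : {x : Fin 0 → X | cntf A x = k+1} = (∅ : Set (Fin 0 → X)) := by
        ext x; simp [cntf]
      rw [this, measure_empty]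
      rw [Nat.choose_eq_zero_of_lt (by omega)]
      norm_num
  | succ n ih =>
    set p := (P A).toReal with hp
    have hp0 : 0 ≤ p := ENNReal.toReal_nonneg
    have hp1 : p ≤ 1 := by
      have h := prob_le_one (μ := P) (s := A)
      have := ENNReal.toReal_mono ENNReal.one_ne_top h
      simpa using this
    have hq0 : 0 ≤ 1 - p := by linarith
    have hPA : P A = ENNReal.ofReal p := (ENNReal.ofReal_toReal (measure_ne_top P A)).symm
    have hPAc : P Aᶜ = ENNReal.ofReal (1 - p) := by
      rw [prob_compl_eq_one_sub hA, ← ENNReal.ofReal_one, hPA, ← ENNReal.ofReal_sub _ hp0]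
    have e := MeasureTheory.measurePreserving_piFinSuccAbove (fun _ : Fin (n+1) => P) 0
    set T : Set (X × (Fin n → X)) :=
      {q | (if q.1 ∈ A then 1 else 0) + cntf A q.2 = k} with hT
    have hmeasT : MeasurableSet T := by
      have h1 : Measurable (fun q : X × (Fin n → X) =>
          (if q.1 ∈ A then 1 else 0) + cntf A q.2) := by
        refine Measurable.add ?_ ((measurable_cntf hA).comp measurable_snd)
        exact (Measurable.piecewise hA measurable_const measurable_const).comp measurable_fst
      exact h1 (measurableSet_singleton k)
    have hpre : (MeasurableEquiv.piFinSuccAbove (fun _ : Fin (n+1) => X) 0) ⁻¹' T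
        = {x : Fin (n+1) → X | cntf A x = k} := by
      ext x
      simp only [Set.mem_preimage, Set.mem_setOf_eq, hT, MeasurableEquiv.piFinSuccAbove]
      rw [cntf_succ A x]
      rfl
    have hmp : (Measure.pi fun _ : Fin (n+1) => P) {x | cntf A x = k}
        = (P.prod (Measure.pi fun _ : Fin n => P)) T := by
      rw [← hpre]
      exact e.measure_preimage hmeasT.nullMeasurableSet
    have hsplit : T = (A ×ˢ {y | 1 + cntf A y = k}) ∪ (Aᶜ ×ˢ {y | cntf A y = k}) := by
      ext q
      by_cases hq : q.1 ∈ A <;> simp [hT, hq]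
    have hC1 : MeasurableSet {y : Fin n → X | 1 + cntf A y = k} := by
      have : Measurable (fun y : Fin n → X => 1 + cntf A y) :=
        (measurable_cntf hA).const_add 1
      exact this (measurableSet_singleton k)
    have hC0 : MeasurableSet {y : Fin n → X | cntf A y = k} :=
      (measurable_cntf hA) (measurableSet_singleton k)
    have hdisj : Disjoint (A ×ˢ {y | 1 + cntf A y = k}) (Aᶜ ×ˢ {y : Fin n → X | cntf A y = k}) := by
      rw [Set.disjoint_left]
      rintro ⟨a, y⟩ ⟨ha, -⟩ ⟨ha', -⟩
      exact ha' ha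
    rw [hmp, hsplit, measure_union hdisj (hA.compl.prod hC0), Measure.prod_prod,
      Measure.prod_prod]
    cases k with
    | zero =>
      have h1 : {y : Fin n → X | 1 + cntf A y = 0} = (∅ : Set (Fin n → X)) := by
        ext y; simp
      rw [h1, measure_empty, mul_zero, zero_add, ih 0, hPAc,
        ← ENNReal.ofReal_mul hq0]
      congr 1
      simp only [Nat.choose_zero_right, Nat.cast_one, pow_zero, one_mul, Nat.sub_zero]
      ring
    | succ j =>
      have h1 : {y : Fin n → X | 1 + cntf A y = j+1} = {y : Fin n → X | cntf A y = j} := by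
        ext y; simp only [Set.mem_setOf_eq]; omega
      rw [h1, ih j, ih (j+1), hPA, hPAc, ← ENNReal.ofReal_mul hp0,
        ← ENNReal.ofReal_mul hq0, ← ENNReal.ofReal_add (by positivity) (by positivity)]
      congr 1
      rcases lt_trichotomy j n with hj | hj | hj
      · have hnj : n - j = (n - (j+1)) + 1 := by omega
        have hnj2 : (n+1) - (j+1) = n - j := by omega
        rw [hnj2, hnj]
        have hpas : ((n+1).choose (j+1) : ℝ) = (n.choose j : ℝ) + (n.choose (j+1) : ℝ) := by
          rw [Nat.choose_succ_succ]
          push_cast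
          ring
        rw [hpas]
        ring
      · subst hj
        rw [Nat.choose_succ_self, Nat.choose_self, Nat.choose_self]
        norm_num
        ring
      · rw [Nat.choose_eq_zero_of_lt hj, Nat.choose_eq_zero_of_lt (by omega),
          Nat.choose_eq_zero_of_lt (by omega)]
        norm_num

private lemma cdf_cnt {X : Type*} [MeasurableSpace X] (P : Measure X) [IsProbabilityMeasure P]
    {A : Set X} (hA : MeasurableSet A) (n m : ℕ) :
    (Measure.pi fun _ : Fin n => P) {x | cntf A x ≤ m}
      = ENNReal.ofReal (Fsum n (P A).toReal m) := by
  set p := (P A).toReal with hp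
  have hp0 : 0 ≤ p := ENNReal.toReal_nonneg
  have hp1 : p ≤ 1 := by
    have h := prob_le_one (μ := P) (s := A)
    have := ENNReal.toReal_mono ENNReal.one_ne_top h
    simpa using this
  have hq0 : 0 ≤ 1 - p := by linarith
  have hU : {x : Fin n → X | cntf A x ≤ m}
      = ⋃ k ∈ Finset.range (m+1), {x | cntf A x = k} := by
    ext x
    simp only [Set.mem_setOf_eq, Set.mem_iUnion, Finset.mem_range]
    constructor
    · intro h; exact ⟨cntf A x, by omega, rfl⟩
    · rintro ⟨k, hk, hx⟩; omega
  rw [hU, measure_biUnion_finset ?_ ?_]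
  · rw [Finset.sum_congr rfl (fun k _ => pmf_cnt P hA n k)]
    rw [← ENNReal.ofReal_sum_of_nonneg (fun k _ => by positivity)]
    rfl
  · intro i _ j _ hij
    simp only [Function.onFun]
    rw [Set.disjoint_left]
    intro x hx hx'
    simp only [Set.mem_setOf_eq] at hx hx'
    omega
  · intro k _
    exact (measurable_cntf hA) (measurableSet_singleton k)

/- ### Monotonicity in p via coupling -/

private lemma Fsum_anti {n m : ℕ} {p p' : ℝ} (h0 : 0 ≤ p) (hpp' : p ≤ p') (h1 : p' ≤ 1) :
    Fsum n p' m ≤ Fsum n p m := by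
  set Q : Measure ℝ := volume.restrict (Set.Icc (0:ℝ) 1) with hQ
  haveI : IsProbabilityMeasure Q := by
    constructor
    rw [hQ, Measure.restrict_apply_univ, Real.volume_Icc]
    norm_num
  have hmes : ∀ r : ℝ, (Q (Set.Iic r)).toReal = r → True := fun _ _ => trivial
  have hQval : ∀ r : ℝ, 0 ≤ r → r ≤ 1 → Q (Set.Iic r) = ENNReal.ofReal r := by
    intro r hr0 hr1
    rw [hQ, Measure.restrict_apply measurableSet_Iic]
    have : Set.Iic r ∩ Set.Icc 0 1 = Set.Icc 0 r := by
      ext x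
      simp only [Set.mem_inter_iff, Set.mem_Iic, Set.mem_Icc]
      constructor
      · rintro ⟨h1', h2', _⟩; exact ⟨h2', h1'⟩
      · rintro ⟨h1', h2'⟩; exact ⟨h2', h1', by linarith⟩
    rw [this, Real.volume_Icc, sub_zero]
  have hIp : (Q (Set.Iic p)).toReal = p := by
    rw [hQval p h0 (by linarith), ENNReal.toReal_ofReal h0]
  have hIp' : (Q (Set.Iic p')).toReal = p' := by
    rw [hQval p' (by linarith) h1, ENNReal.toReal_ofReal (by linarith)]
  have hsub : {x : Fin n → ℝ | cntf (Set.Iic p') x ≤ m} ⊆ {x | cntf (Set.Iic p) x ≤ m} := by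
    intro x hx
    simp only [Set.mem_setOf_eq] at hx ⊢
    refine le_trans ?_ hx
    unfold cntf
    refine Finset.card_le_card (Finset.monotone_filter_right _ ?_)
    intro i _ hi
    exact Set.mem_Iic.mpr (le_trans (Set.mem_Iic.mp hi) hpp')
  have h1' := cdf_cnt Q (measurableSet_Iic (a := p)) n m
  have h2' := cdf_cnt Q (measurableSet_Iic (a := p')) n m
  rw [hIp] at h1'
  rw [hIp'] at h2'
  have := measure_mono (μ := Measure.pi fun _ : Fin n => Q) hsub
  rw [h1', h2'] at this
  have hFn : 0 ≤ Fsum n p m := Fsum_nonneg h0 (by linarith)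
  exact (ENNReal.ofReal_le_ofReal_iff hFn).mp this

/- ### The discrete pairing (core, case B) -/

private noncomputable def gf (n a b : ℕ) (k : ℕ) : ℝ :=
  (n.choose k : ℝ) * (a:ℝ)^k * (b:ℝ)^(n-k)

private lemma gf_nonneg (n a b k : ℕ) : 0 ≤ gf n a b k := by
  unfold gf; positivity

private lemma gf_step {n a b : ℕ} {k : ℕ} (hk : k < n) :
    ((k:ℝ)+1) * (b:ℝ) * gf n a b (k+1) = ((n - k : ℕ) : ℝ) * (a:ℝ) * gf n a b k := by
  unfold gf
  have h1 : n.choose (k+1) * (k+1) = n.choose k * (n-k) := Nat.choose_succ_right_eq n k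
  have h1' : ((n.choose (k+1)):ℝ) * ((k:ℝ)+1) = (n.choose k : ℝ) * ((n-k : ℕ):ℝ) := by
    exact_mod_cast h1
  have h2 : (b:ℝ)^(n-k) = (b:ℝ)^(n-(k+1)) * b := by
    rw [← pow_succ]
    congr 1
    omega
  rw [h2, pow_succ]
  linear_combination ((a:ℝ)^k * (a:ℝ) * (b:ℝ)^(n-(k+1)) * (b:ℝ)) * h1'

private lemma tw_pair {a b n : ℕ} (hn : n = a + b) (hab : a ≤ b) :
    ∀ j, 1 ≤ j → j ≤ a → gf n a b (a - j) ≤ gf n a b (a + j - 1) := by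
  intro j
  induction j with
  | zero => intro h; exact absurd h (by omega)
  | succ j ih =>
    intro _ hja
    rcases Nat.eq_zero_or_pos j with rfl | hj1
    · -- base case : gf (a-1) ≤ gf a
      have ha : 1 ≤ a := hja
      have hb : 1 ≤ b := le_trans ha hab
      have hstep := gf_step (n := n) (a := a) (b := b) (k := a-1) (by omega)
      rw [show a - 1 + 1 = a from by omega] at hstep
      rw [show n - (a-1) = b + 1 from by omega] at hstep
      have hca : ((a-1 : ℕ):ℝ) + 1 = (a:ℝ) := by
        have : ((a-1 : ℕ):ℝ) = (a:ℝ) - 1 := by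
          push_cast [Nat.cast_sub ha]; ring
        rw [this]; ring
      rw [hca] at hstep
      have hbc : ((b+1 : ℕ):ℝ) = (b:ℝ) + 1 := by push_cast; ring
      rw [hbc] at hstep
      -- hstep : a * b * gf n a b a = (b+1) * a * gf n a b (a-1)
      have hga := gf_nonneg n a b a
      have ha' : (1:ℝ) ≤ (a:ℝ) := by exact_mod_cast ha
      have hM : (0:ℝ) < ((b:ℝ)+1) * a := by positivity
      have ha0 : (0:ℝ) ≤ (a:ℝ) := by positivity
      have key : gf n a b (a-1) * (((b:ℝ)+1) * a) ≤ gf n a b a * (((b:ℝ)+1) * a) := by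
        nlinarith [hstep, mul_nonneg ha0 hga]
      rw [show a + 1 - 1 = a from by omega]
      exact le_of_mul_le_mul_right key hM
    · -- inductive step
      have hja' : j ≤ a := by omega
      have IH := ih hj1 hja'
      have ha1 : j + 1 ≤ a := hja
      have hb1 : 1 ≤ b := le_trans (by omega) hab
      -- e1
      have e1 := gf_step (n := n) (a := a) (b := b) (k := a-(j+1)) (by omega)
      rw [show a - (j+1) + 1 = a - j from by omega,
          show n - (a - (j+1)) = b + j + 1 from by omega] at e1
      have hc1 : ((a-(j+1) : ℕ):ℝ) + 1 = (a:ℝ) - j := by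
        have : ((a-(j+1) : ℕ):ℝ) = (a:ℝ) - (j+1) := by push_cast [Nat.cast_sub ha1]; ring
        rw [this]; ring
      have hc2 : ((b+j+1 : ℕ):ℝ) = (b:ℝ) + j + 1 := by push_cast; ring
      rw [hc1, hc2] at e1
      -- e1 : ((a:ℝ)-j) * b * gf n a b (a-j) = ((b:ℝ)+j+1) * a * gf n a b (a-(j+1))
      -- e2
      have e2 := gf_step (n := n) (a := a) (b := b) (k := a+j-1) (by omega)
      rw [show a + j - 1 + 1 = a + j from by omega,
          show n - (a + j - 1) = b + 1 - j from by omega] at e2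
      have hc3 : ((a+j-1 : ℕ):ℝ) + 1 = (a:ℝ) + j := by
        have : ((a+j-1 : ℕ):ℝ) = (a:ℝ) + j - 1 := by
          push_cast [Nat.cast_sub (by omega : 1 ≤ a + j)]; ring
        rw [this]; ring
      have hc4 : ((b+1-j : ℕ):ℝ) = (b:ℝ) + 1 - j := by
        push_cast [Nat.cast_sub (by omega : j ≤ b + 1)]; ring
      rw [hc3, hc4] at e2
      -- e2 : ((a:ℝ)+j) * b * gf n a b (a+j) = ((b:ℝ)+1-j) * a * gf n a b (a+j-1)
      -- scalar inequality
      have haj : (j:ℝ) + 1 ≤ (a:ℝ) := by exact_mod_cast ha1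
      have habR : (a:ℝ) ≤ (b:ℝ) := by exact_mod_cast hab
      have hjR : (1:ℝ) ≤ (j:ℝ) := by exact_mod_cast hj1
      have scalar : ((a:ℝ)-j)*((a:ℝ)+j)*(b:ℝ)^2 ≤ ((b:ℝ)+j+1)*((b:ℝ)+1-j)*(a:ℝ)^2 := by
        have f1 : (a:ℝ)^2*(b:ℝ)^2 ≤ (a:ℝ)^2*((b:ℝ)+1)^2 := by nlinarith [sq_nonneg (a:ℝ)]
        have f2 : (j:ℝ)^2*(a:ℝ)^2 ≤ (j:ℝ)^2*(b:ℝ)^2 := by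
          have ha0R : (0:ℝ) ≤ (a:ℝ) := by positivity
          have : (a:ℝ)^2 ≤ (b:ℝ)^2 := by nlinarith
          exact mul_le_mul_of_nonneg_left this (sq_nonneg _)
        nlinarith [f1, f2]
      have hg1 := gf_nonneg n a b (a+j-1)
      have hg2 := gf_nonneg n a b (a-j)
      have hM : (0:ℝ) < ((b:ℝ)+j+1) * a * (((a:ℝ)+j) * b) := by
        have ha0 : (0:ℝ) < (a:ℝ) := by linarith
        have hb0 : (0:ℝ) < (b:ℝ) := by linarith
        positivity
      have key : gf n a b (a-(j+1)) * (((b:ℝ)+j+1) * a * (((a:ℝ)+j) * b))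
          ≤ gf n a b (a+j) * (((b:ℝ)+j+1) * a * (((a:ℝ)+j) * b)) := by
        have step1 : gf n a b (a-(j+1)) * (((b:ℝ)+j+1) * a * (((a:ℝ)+j) * b))
            = ((a:ℝ)-j)*((a:ℝ)+j)*(b:ℝ)^2 * gf n a b (a-j) := by
          linear_combination (-((a:ℝ)+j) * (b:ℝ)) * e1
        have step2 : gf n a b (a+j) * (((b:ℝ)+j+1) * a * (((a:ℝ)+j) * b))
            = ((b:ℝ)+j+1)*((b:ℝ)+1-j)*(a:ℝ)^2 * gf n a b (a+j-1) := by
          linear_combination (((b:ℝ)+j+1) * a) * e2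
        rw [step1, step2]
        have hcoef : (0:ℝ) ≤ ((a:ℝ)-j)*((a:ℝ)+j)*(b:ℝ)^2 := by
          have : (0:ℝ) ≤ (a:ℝ)-j := by linarith
          positivity
        calc ((a:ℝ)-j)*((a:ℝ)+j)*(b:ℝ)^2 * gf n a b (a-j)
            ≤ ((a:ℝ)-j)*((a:ℝ)+j)*(b:ℝ)^2 * gf n a b (a+j-1) :=
              mul_le_mul_of_nonneg_left IH hcoef
          _ ≤ ((b:ℝ)+j+1)*((b:ℝ)+1-j)*(a:ℝ)^2 * gf n a b (a+j-1) :=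
              mul_le_mul_of_nonneg_right scalar hg1
      have := le_of_mul_le_mul_right key hM
      rwa [show a + (j+1) - 1 = a + j from by omega]

private lemma coreB {n a : ℕ} (ha : 1 ≤ a) (h2a : 2*a ≤ n) :
    (1:ℝ)/2 ≤ Tsum n ((a:ℝ)/n) a := by
  set b := n - a with hb
  have hn : n = a + b := by omega
  have hab : a ≤ b := by omega
  have hn0 : (0:ℝ) < (n:ℝ) := by exact_mod_cast (by omega : 0 < n)
  have h1c : 1 - (a:ℝ)/n = (b:ℝ)/n := by
    field_simp
    have : ((b:ℕ):ℝ) = (n:ℝ) - a := by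
      rw [hb]; push_cast [Nat.cast_sub (by omega : a ≤ n)]; ring
    linarith [this]
  have f_eq : ∀ k, k ≤ n → (n.choose k:ℝ)*((a:ℝ)/n)^k*(1-(a:ℝ)/n)^(n-k)
      = gf n a b k / (n:ℝ)^n := by
    intro k hk
    rw [h1c]
    unfold gf
    rw [div_pow, div_pow]
    have hnn : (n:ℝ)^k * (n:ℝ)^(n-k) = (n:ℝ)^n := by
      rw [← pow_add]; congr 1; omega
    calc (n.choose k:ℝ) * ((a:ℝ)^k/(n:ℝ)^k) * ((b:ℝ)^(n-k)/(n:ℝ)^(n-k))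
        = ((n.choose k:ℝ) * (a:ℝ)^k * (b:ℝ)^(n-k)) / ((n:ℝ)^k * (n:ℝ)^(n-k)) := by ring
      _ = ((n.choose k:ℝ) * (a:ℝ)^k * (b:ℝ)^(n-k)) / (n:ℝ)^n := by rw [hnn]
  have hsplit := Fsum_add_Tsum (n := n) (k := a) ((a:ℝ)/n) ha (by omega)
  have hlow : Fsum n ((a:ℝ)/n) (a-1) = (∑ k ∈ Finset.range a, gf n a b k) / (n:ℝ)^n := by
    unfold Fsum
    rw [show a - 1 + 1 = a from by omega, Finset.sum_div]
    exact Finset.sum_congr rfl (fun k hk => f_eq k (by simp at hk; omega))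
  have htail : Tsum n ((a:ℝ)/n) a = (∑ k ∈ Finset.Icc a n, gf n a b k) / (n:ℝ)^n := by
    unfold Tsum
    rw [Finset.sum_div]
    exact Finset.sum_congr rfl (fun k hk => f_eq k (by simp at hk; omega))
  have hS1 : ∑ k ∈ Finset.range a, gf n a b k
      ≤ ∑ k ∈ Finset.range a, gf n a b (2*a-1-k) := by
    refine Finset.sum_le_sum (fun k hk => ?_)
    simp only [Finset.mem_range] at hk
    have := tw_pair hn hab (a - k) (by omega) (by omega)
    rwa [show a - (a-k) = k from by omega, show a + (a-k) - 1 = 2*a-1-k from by omega] at this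
  have hS2 : ∑ k ∈ Finset.range a, gf n a b (2*a-1-k)
      = ∑ i ∈ Finset.Icc a (2*a-1), gf n a b i := by
    refine Finset.sum_nbij' (fun k => 2*a-1-k) (fun i => 2*a-1-i) ?_ ?_ ?_ ?_ ?_
    · intro k hk; simp only [Finset.mem_range] at hk; simp only [Finset.mem_Icc]; omega
    · intro i hi; simp only [Finset.mem_Icc] at hi; simp only [Finset.mem_range]; omega
    · intro k hk; simp only [Finset.mem_range] at hk; show 2*a-1-(2*a-1-k) = k; omega
    · intro i hi; simp only [Finset.mem_Icc] at hi; show 2*a-1-(2*a-1-i) = i; omega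
    · intro k _; rfl
  have hS3 : ∑ i ∈ Finset.Icc a (2*a-1), gf n a b i ≤ ∑ i ∈ Finset.Icc a n, gf n a b i := by
    refine Finset.sum_le_sum_of_subset_of_nonneg (Finset.Icc_subset_Icc_right (by omega))
      (fun i _ _ => gf_nonneg n a b i)
  have hle : Fsum n ((a:ℝ)/n) (a-1) ≤ Tsum n ((a:ℝ)/n) a := by
    rw [hlow, htail]
    have hpow : (0:ℝ) < (n:ℝ)^n := by positivity
    have hcomb : ∑ k ∈ Finset.range a, gf n a b k ≤ ∑ i ∈ Finset.Icc a n, gf n a b i := by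
      refine hS1.trans ?_
      rw [hS2]
      exact hS3
    gcongr
  linarith


/- ### Integral representation and reflection (core, case A) -/

private lemma choose_id1 {n j : ℕ} (hn : 1 ≤ n) (hj : 1 ≤ j) :
    (n:ℝ) * ((n-1).choose (j-1) : ℝ) = (j:ℝ) * (n.choose j : ℝ) := by
  have h := Nat.add_one_mul_choose_eq (n-1) (j-1)
  rw [show n - 1 + 1 = n from by omega, show j - 1 + 1 = j from by omega] at h
  -- h : n * (n-1).choose (j-1) = n.choose j * j
  have h' := congrArg (fun t : ℕ => (t:ℝ)) h
  push_cast at h'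
  linear_combination h'

private lemma choose_id2 {n j : ℕ} (hn : 1 ≤ n) :
    (n:ℝ) * ((n-1).choose j : ℝ) = ((n-j : ℕ):ℝ) * (n.choose j : ℝ) := by
  have h1 := Nat.add_one_mul_choose_eq (n-1) j
  rw [show n - 1 + 1 = n from by omega] at h1
  -- h1 : n * (n-1).choose j = n.choose (j+1) * (j+1)
  have h2 := Nat.choose_succ_right_eq n j
  -- h2 : n.choose (j+1) * (j+1) = n.choose j * (n - j)
  have h3 := h1.trans h2
  have h' := congrArg (fun t : ℕ => (t:ℝ)) h3
  push_cast [-Nat.cast_sub] at h'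
  linear_combination h'

private lemma hasDerivAt_Tsum (n k : ℕ) (hk1 : 1 ≤ k) (hkn : k ≤ n) (p : ℝ) :
    HasDerivAt (fun t => Tsum n t k)
      (((k:ℝ) * n.choose k) * (p^(k-1) * (1-p)^(n-k))) p := by
  have hn1 : 1 ≤ n := le_trans hk1 hkn
  have hterm : ∀ j ∈ Finset.Icc k n,
      HasDerivAt (fun t : ℝ => (n.choose j : ℝ) * t^j * (1-t)^(n-j))
        ((n:ℝ) * (((n-1).choose (j-1) : ℝ) * p^(j-1) * (1-p)^(n-1-(j-1))
          - ((n-1).choose j : ℝ) * p^j * (1-p)^(n-1-j))) p := by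
    intro j hj
    simp only [Finset.mem_Icc] at hj
    obtain ⟨hjk, hjn⟩ := hj
    have hj1 : 1 ≤ j := le_trans hk1 hjk
    have d1 : HasDerivAt (fun t : ℝ => t^j) ((j:ℝ) * p^(j-1)) p := hasDerivAt_pow j p
    have dinner : HasDerivAt (fun t : ℝ => 1 - t) (-1 : ℝ) p := by
      simpa using (hasDerivAt_id p).const_sub 1
    have d2 : HasDerivAt (fun t : ℝ => (1-t)^(n-j))
        (-(((n-j : ℕ):ℝ) * (1-p)^(n-j-1))) p := by
      have h := (hasDerivAt_pow (n-j) (1-p)).comp p dinner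
      convert h using 1
      · rfl
      · rfl
      · rfl
      · ring
    have d3 := (d1.mul d2).const_mul ((n.choose j : ℝ))
    convert d3 using 1
    · rfl
    · rfl
    · ext t; simp only [Pi.mul_apply]; ring
    · rw [show n-1-(j-1) = n-j from by omega, show n-1-j = n-j-1 from by omega]
      have i1 := choose_id1 (n := n) (j := j) hn1 hj1
      have i2 := choose_id2 (n := n) (j := j) hn1
      linear_combination (p^(j-1) * (1-p)^(n-j)) * i1 - (p^j * (1-p)^(n-j-1)) * i2
  have hsum := HasDerivAt.fun_sum hterm
  convert hsum using 1
  · rfl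
  · rfl
  · rfl
  rw [← Finset.mul_sum]
  rw [← Finset.Ico_add_one_right_eq_Icc, Finset.sum_Ico_eq_sum_range]
  have hcongr : ∀ i ∈ Finset.range (n + 1 - k),
      (((n-1).choose ((k+i)-1) : ℝ) * p^((k+i)-1) * (1-p)^(n-1-((k+i)-1))
        - ((n-1).choose (k+i) : ℝ) * p^(k+i) * (1-p)^(n-1-(k+i)))
      = (fun i => ((n-1).choose (k-1+i) : ℝ) * p^(k-1+i) * (1-p)^(n-1-(k-1+i))) i
        - (fun i => ((n-1).choose (k-1+i) : ℝ) * p^(k-1+i) * (1-p)^(n-1-(k-1+i))) (i+1) := by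
    intro i _
    simp only
    rw [show k + i - 1 = k-1+i from by omega, show k + i = k-1+(i+1) from by omega]
  rw [Finset.sum_congr rfl hcongr, Finset.sum_range_sub']
  simp only [Nat.add_zero]
  rw [show k-1+(n+1-k) = n from by omega, show n-1-(k-1) = n-k from by omega]
  rw [Nat.choose_eq_zero_of_lt (by omega : n - 1 < n)]
  have i1 := choose_id1 (n := n) (j := k) hn1 hk1
  push_cast
  linear_combination (-(p^(k-1) * (1-p)^(n-k))) * i1

private lemma Tsum_zero (n k : ℕ) (hk1 : 1 ≤ k) : Tsum n 0 k = 0 := by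
  unfold Tsum
  refine Finset.sum_eq_zero (fun j hj => ?_)
  simp only [Finset.mem_Icc] at hj
  rw [zero_pow (by omega : j ≠ 0)]
  ring

private lemma Tsum_eq_integral (n k : ℕ) (hk1 : 1 ≤ k) (hkn : k ≤ n) (p : ℝ) :
    Tsum n p k = ((k:ℝ) * n.choose k) * ∫ t in (0:ℝ)..p, t^(k-1)*(1-t)^(n-k) := by
  set κ : ℝ := ((k:ℝ) * n.choose k) with hκ
  set φ : ℝ → ℝ := fun t => t^(k-1)*(1-t)^(n-k) with hφdef
  have hφc : Continuous φ := by
    apply Continuous.mul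
    · exact continuous_pow _
    · exact (continuous_const.sub continuous_id).pow _
  have hK : ∀ x : ℝ, HasDerivAt (fun y => ∫ t in (0:ℝ)..y, φ t) (φ x) x := by
    intro x
    exact intervalIntegral.integral_hasDerivAt_right (hφc.intervalIntegrable _ _)
      (hφc.stronglyMeasurableAtFilter _ _) hφc.continuousAt
  have hD : ∀ x : ℝ, HasDerivAt (fun y => Tsum n y k - κ * ∫ t in (0:ℝ)..y, φ t) 0 x := by
    intro x
    have h1 := hasDerivAt_Tsum n k hk1 hkn x
    have h2 := (hK x).const_mul κ
    have h3 := h1.fun_sub h2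
    simpa [hκ, hφdef] using h3
  have hconst := is_const_of_deriv_eq_zero (f := fun y => Tsum n y k - κ * ∫ t in (0:ℝ)..y, φ t)
    (fun x => (hD x).differentiableAt) (fun x => (hD x).deriv)
  have h0 := hconst p 0
  simp only [intervalIntegral.integral_same, mul_zero, sub_zero, Tsum_zero n k hk1] at h0
  linarith [h0]

private lemma Tsum_one (n k : ℕ) (hkn : k ≤ n) : Tsum n 1 k = 1 := by
  unfold Tsum
  rw [Finset.sum_eq_single n]
  · rw [Nat.choose_self, Nat.sub_self]
    norm_num
  · intro j hj hjn
    simp only [Finset.mem_Icc] at hj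
    rw [show (1:ℝ)-1 = 0 from by ring, zero_pow (by omega : n - j ≠ 0)]
    ring
  · intro h
    exact absurd (Finset.mem_Icc.mpr ⟨hkn, le_rfl⟩) h

private lemma scalar_core {m β x : ℝ} (hm : 1 ≤ m) (hmβ : m ≤ β + 1) (hβ0 : 0 ≤ β)
    (hx0 : 0 ≤ x) (hxm : x ≤ m) :
    β*(β+1)*(m^2 - x^2) ≤ m*m*((β+1)^2 - x^2) := by
  have h2 : m*m - β*(β+1) ≤ m := by nlinarith
  have hxx : x*x ≤ m*m := by nlinarith
  have h3 : x*x*(m*m - β*(β+1)) ≤ x*x*m := by nlinarith [mul_nonneg hx0 hx0]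
  have h4 : x*x*m ≤ m*m*m := by nlinarith
  have h5 : m*m*m ≤ m*m*(β+1) := by nlinarith
  nlinarith [h3, h4, h5]

private lemma refl_pt {n m : ℕ} (hm : 1 ≤ m) (h2m : 2*m ≤ n) {u : ℝ}
    (hu0 : 0 ≤ u) (huc : u ≤ (m:ℝ)/n) :
    ((m:ℝ)/n - u)^m * (1-((m:ℝ)/n - u))^(n-m-1)
      ≤ ((m:ℝ)/n + u)^m * (1-((m:ℝ)/n + u))^(n-m-1) := by
  have hn0 : (0:ℝ) < (n:ℝ) := by exact_mod_cast (by omega : 0 < n)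
  have hm0 : (0:ℝ) < (m:ℝ) := by exact_mod_cast hm
  set c : ℝ := (m:ℝ)/n with hc
  set β : ℕ := n - m - 1 with hβ
  have hc0 : 0 < c := by rw [hc]; positivity
  have h2mR : 2*(m:ℝ) ≤ (n:ℝ) := by exact_mod_cast h2m
  have hc2 : 2*c ≤ 1 := by
    have h' : 2*c = (2*(m:ℝ))/n := by rw [hc]; ring
    rw [h', div_le_one hn0]; linarith
  have hβ1 : ((β:ℕ):ℝ) + 1 = (n:ℝ) - m := by
    have h' : (β + 1 : ℕ) = n - m := by omega
    have h'' := congrArg (fun t : ℕ => (t:ℝ)) h'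
    push_cast [Nat.cast_sub (by omega : m ≤ n)] at h''
    linarith
  have hmR : (1:ℝ) ≤ (m:ℝ) := by exact_mod_cast hm
  rcases eq_or_lt_of_le huc with heq | hlt
  · -- u = c : left side vanishes
    rw [heq, sub_self, zero_pow (by omega : m ≠ 0), zero_mul]
    have h1 : (0:ℝ) ≤ c + c := by linarith
    have h2 : (0:ℝ) ≤ 1 - (c + c) := by linarith
    exact mul_nonneg (pow_nonneg (by linarith) m) (pow_nonneg (by linarith) β)
  · -- u < c
    rcases eq_or_lt_of_le hu0 with hequ | hu0'
    · rw [← hequ]; simp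
    have hcu1 : 0 < c - u := by linarith
    have hcu2 : 0 < c + u := by linarith
    have h1cu : 0 < 1 - (c + u) := by linarith
    have h1cu' : 0 < 1 - (c - u) := by linarith
    set η : ℝ → ℝ := fun v => (m:ℝ) * Real.log (c+v) + (β:ℝ) * Real.log (1-(c+v))
        - (m:ℝ) * Real.log (c-v) - (β:ℝ) * Real.log (1-(c-v)) with hηdef
    have hd : ∀ v ∈ Set.Icc (0:ℝ) u, HasDerivAt η
        ((m:ℝ)*(1/(c+v)) + (β:ℝ)*((-1)/(1-(c+v))) - (m:ℝ)*((-1)/(c-v))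
          - (β:ℝ)*(1/(1-(c-v)))) v := by
      intro v hv
      obtain ⟨hv0, hvu⟩ := hv
      have d1 : 0 < c + v := by linarith
      have d2 : 0 < c - v := by linarith
      have d3 : 0 < 1 - (c+v) := by linarith
      have d4 : 0 < 1 - (c-v) := by linarith
      have t1 : HasDerivAt (fun w : ℝ => Real.log (c+w)) (1/(c+v)) v := by
        have h := ((hasDerivAt_id v).const_add c).log (by linarith : c + v ≠ 0)
        simpa using h
      have t2 : HasDerivAt (fun w : ℝ => Real.log (1-(c+w))) ((-1)/(1-(c+v))) v := by
        have hin : HasDerivAt (fun w : ℝ => 1 - (c+w)) (-1 : ℝ) v := by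
          simpa using ((hasDerivAt_id v).const_add c).const_sub 1
        exact hin.log (by linarith)
      have t3 : HasDerivAt (fun w : ℝ => Real.log (c-w)) ((-1)/(c-v)) v := by
        have hin : HasDerivAt (fun w : ℝ => c - w) (-1 : ℝ) v := by
          simpa using (hasDerivAt_id v).const_sub c
        exact hin.log (by linarith)
      have t4 : HasDerivAt (fun w : ℝ => Real.log (1-(c-w))) (1/(1-(c-v))) v := by
        have hin : HasDerivAt (fun w : ℝ => 1 - (c-w)) (1 : ℝ) v := by
          have := ((hasDerivAt_id v).const_sub c).const_sub 1
          simpa using this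
        exact hin.log (by linarith)
      exact (((t1.const_mul (m:ℝ)).add (t2.const_mul (β:ℝ))).sub
        (t3.const_mul (m:ℝ))).sub (t4.const_mul (β:ℝ))
    have hdpos : ∀ v ∈ Set.Icc (0:ℝ) u,
        0 ≤ (m:ℝ)*(1/(c+v)) + (β:ℝ)*((-1)/(1-(c+v))) - (m:ℝ)*((-1)/(c-v))
          - (β:ℝ)*(1/(1-(c-v))) := by
      intro v hv
      obtain ⟨hv0, hvu⟩ := hv
      have hvc : v < c := lt_of_le_of_lt hvu hlt
      have d1 : 0 < c + v := by linarith
      have d2 : 0 < c - v := by linarith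
      have d3 : 0 < 1 - (c+v) := by linarith
      have d4 : 0 < 1 - (c-v) := by linarith
      have hx0 : (0:ℝ) ≤ (n:ℝ)*v := by positivity
      have hxm : (n:ℝ)*v ≤ (m:ℝ) := by
        have : v < (m:ℝ)/n := by rw [← hc]; exact hvc
        rw [lt_div_iff₀ hn0] at this
        linarith
      have hβ0R : (0:ℝ) ≤ (β:ℝ) := by positivity
      have hsc := scalar_core (m := (m:ℝ)) (β := (β:ℝ)) (x := (n:ℝ)*v)
        hmR (by linarith) hβ0R hx0 hxm
      have hceq : c*(n:ℝ) = (m:ℝ) := by rw [hc]; field_simp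
      have h1ceq : (1-c)*(n:ℝ) = (β:ℝ)+1 := by
        rw [hc]
        have h' : (1 - (m:ℝ)/n)*(n:ℝ) = (n:ℝ) - m := by field_simp
        rw [h']; linarith
      have eA : (m:ℝ)*c*((1-c)^2-v^2)*(n:ℝ)^3
          = (m:ℝ)*(m:ℝ)*(((β:ℝ)+1)^2-((n:ℝ)*v)^2) := by
        linear_combination ((m:ℝ)*(((1:ℝ)-c)^2 - v^2)*(n:ℝ)^2) * hceq
          + ((m:ℝ)*(m:ℝ)*((1-c)*(n:ℝ)+((β:ℝ)+1))) * h1ceq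
      have eB : (β:ℝ)*(1-c)*(c^2-v^2)*(n:ℝ)^3
          = (β:ℝ)*((β:ℝ)+1)*((m:ℝ)^2-((n:ℝ)*v)^2) := by
        linear_combination ((β:ℝ)*(c^2-v^2)*(n:ℝ)^2) * h1ceq
          + ((β:ℝ)*((β:ℝ)+1)*(c*(n:ℝ)+(m:ℝ))) * hceq
      have hsc2 : (β:ℝ)*(1-c)*(c^2-v^2)*(n:ℝ)^3 ≤ (m:ℝ)*c*((1-c)^2-v^2)*(n:ℝ)^3 := by
        rw [eA, eB]
        exact hsc
      have key : (β:ℝ)*(1-c)*(c^2-v^2) ≤ (m:ℝ)*c*((1-c)^2-v^2) := by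
        have hn3 : (0:ℝ) < (n:ℝ)^3 := by positivity
        exact le_of_mul_le_mul_right hsc2 hn3
      have l1 : (m:ℝ)/(c+v) + (m:ℝ)/(c-v) = 2*(m:ℝ)*c/((c+v)*(c-v)) := by
        field_simp
        ring
      have l2 : (β:ℝ)/(1-(c+v)) + (β:ℝ)/(1-(c-v))
          = 2*(β:ℝ)*(1-c)/((1-(c+v))*(1-(c-v))) := by
        field_simp
        ring
      have hD1 : 0 < (c+v)*(c-v) := mul_pos d1 d2
      have hD2 : 0 < (1-(c+v))*(1-(c-v)) := mul_pos d3 d4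
      have hfrac : 2*(β:ℝ)*(1-c)/((1-(c+v))*(1-(c-v))) ≤ 2*(m:ℝ)*c/((c+v)*(c-v)) := by
        rw [div_le_div_iff₀ hD2 hD1]
        nlinarith [key]
      have e5 : (m:ℝ)*(1/(c+v)) = (m:ℝ)/(c+v) := by ring
      have e6 : (m:ℝ)*((-1)/(c-v)) = -((m:ℝ)/(c-v)) := by ring
      have e7 : (β:ℝ)*((-1)/(1-(c+v))) = -((β:ℝ)/(1-(c+v))) := by ring
      have e8 : (β:ℝ)*(1/(1-(c-v))) = (β:ℝ)/(1-(c-v)) := by ring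
      rw [e5, e6, e7, e8]
      linarith [l1, l2, hfrac]
    have hmono : MonotoneOn η (Set.Icc 0 u) := by
      apply monotoneOn_of_deriv_nonneg (convex_Icc 0 u)
      · intro v hv
        exact (hd v hv).continuousAt.continuousWithinAt
      · intro v hv
        rw [interior_Icc] at hv
        exact ((hd v (Set.mem_Icc_of_Ioo hv)).differentiableAt).differentiableWithinAt
      · intro v hv
        rw [interior_Icc] at hv
        rw [(hd v (Set.mem_Icc_of_Ioo hv)).deriv]
        exact hdpos v (Set.mem_Icc_of_Ioo hv)
    have hη0 : η 0 = 0 := by simp [hηdef]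
    have hηu : 0 ≤ η u := by
      have h' := hmono (Set.left_mem_Icc.mpr hu0) (Set.right_mem_Icc.mpr hu0) hu0
      rw [hη0] at h'
      exact h'
    have hA : (0:ℝ) < (c-u)^m * (1-(c-u))^β := by positivity
    have hB : (0:ℝ) < (c+u)^m * (1-(c+u))^β := by positivity
    rw [← Real.exp_log hA, ← Real.exp_log hB]
    apply Real.exp_le_exp.mpr
    rw [Real.log_mul (by positivity) (by positivity),
      Real.log_mul (by positivity) (by positivity),
      Real.log_pow, Real.log_pow, Real.log_pow, Real.log_pow]
    simp only [hηdef] at hηu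
    linarith [hηu]

private lemma refl_int {n m : ℕ} (h2m : 2*m ≤ n) (hmn : m < n) :
    (∫ t in (0:ℝ)..((m:ℝ)/n), t^m*(1-t)^(n-m-1))
      ≤ ∫ t in ((m:ℝ)/n)..1, t^m*(1-t)^(n-m-1) := by
  have hn0 : (0:ℝ) < (n:ℝ) := by exact_mod_cast (by omega : 0 < n)
  have h2mR : 2*(m:ℝ) ≤ (n:ℝ) := by exact_mod_cast h2m
  have hφc : Continuous (fun t : ℝ => t^m*(1-t)^(n-m-1)) :=
    (continuous_pow m).mul ((continuous_const.sub continuous_id).pow _)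
  rcases Nat.eq_zero_or_pos m with rfl | hm
  · simp only [Nat.cast_zero, zero_div]
    rw [intervalIntegral.integral_same]
    apply intervalIntegral.integral_nonneg (by norm_num : (0:ℝ) ≤ 1)
    intro t ht
    obtain ⟨ht0, ht1⟩ := ht
    have h1 : (0:ℝ) ≤ 1 - t := by linarith
    positivity
  · set c : ℝ := (m:ℝ)/n with hc
    have hc0 : 0 < c := by rw [hc]; positivity
    have hc2 : 2*c ≤ 1 := by
      have h' : 2*c = (2*(m:ℝ))/n := by rw [hc]; ring
      rw [h', div_le_one hn0]; linarith
    have e1 := intervalIntegral.integral_comp_sub_left (a := (0:ℝ)) (b := c)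
      (fun t => t^m*(1-t)^(n-m-1)) c
    simp only [sub_self, sub_zero] at e1
    have e2 := intervalIntegral.integral_comp_add_left (a := (0:ℝ)) (b := c)
      (fun t => t^m*(1-t)^(n-m-1)) c
    simp only [add_zero] at e2
    have hmono : (∫ v in (0:ℝ)..c, (c-v)^m*(1-(c-v))^(n-m-1))
        ≤ ∫ v in (0:ℝ)..c, (c+v)^m*(1-(c+v))^(n-m-1) := by
      apply intervalIntegral.integral_mono_on hc0.le
      · exact (hφc.comp (continuous_const.sub continuous_id)).intervalIntegrable (μ := volume) _ _
      · exact (hφc.comp (continuous_const.add continuous_id)).intervalIntegrable (μ := volume) _ _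
      · intro v hv
        exact refl_pt hm h2m hv.1 hv.2
    have hadd := intervalIntegral.integral_add_adjacent_intervals (μ := volume)
      (hφc.intervalIntegrable c (c+c)) (hφc.intervalIntegrable (c+c) 1)
    have htail : (0:ℝ) ≤ ∫ t in (c+c)..1, t^m*(1-t)^(n-m-1) := by
      apply intervalIntegral.integral_nonneg (by linarith : c+c ≤ 1)
      intro t ht
      obtain ⟨ht0, ht1⟩ := ht
      have h1 : (0:ℝ) ≤ t := by linarith
      have h2 : (0:ℝ) ≤ 1 - t := by linarith
      positivity
    calc (∫ t in (0:ℝ)..c, t^m*(1-t)^(n-m-1))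
        = ∫ v in (0:ℝ)..c, (c-v)^m*(1-(c-v))^(n-m-1) := e1.symm
      _ ≤ ∫ v in (0:ℝ)..c, (c+v)^m*(1-(c+v))^(n-m-1) := hmono
      _ = ∫ t in c..(c+c), t^m*(1-t)^(n-m-1) := e2
      _ ≤ ∫ t in c..1, t^m*(1-t)^(n-m-1) := by linarith [hadd, htail]

private lemma coreA {n m : ℕ} (h2m : 2*m ≤ n) (hmn : m < n) :
    (1:ℝ)/2 ≤ Fsum n ((m:ℝ)/n) m := by
  have hk1 : 1 ≤ m+1 := by omega
  have hkn : m+1 ≤ n := by omega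
  set c : ℝ := (m:ℝ)/n with hc
  have hTi := Tsum_eq_integral n (m+1) hk1 hkn c
  have hT1 := Tsum_eq_integral n (m+1) hk1 hkn 1
  rw [Tsum_one n (m+1) hkn] at hT1
  rw [show (m+1)-1 = m from by omega, show n-(m+1) = n-m-1 from by omega] at hTi hT1
  have hsplit := Fsum_add_Tsum (n := n) (k := m+1) c hk1 hkn
  rw [show (m+1)-1 = m from by omega] at hsplit
  have hRI := refl_int h2m hmn
  have hφc : Continuous (fun t : ℝ => t^m*(1-t)^(n-m-1)) :=
    (continuous_pow m).mul ((continuous_const.sub continuous_id).pow _)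
  have hadd := intervalIntegral.integral_add_adjacent_intervals (μ := volume)
    (hφc.intervalIntegrable 0 c) (hφc.intervalIntegrable c 1)
  have hκ0 : (0:ℝ) ≤ ((m+1:ℕ):ℝ) * (n.choose (m+1) : ℝ) := by positivity
  have hTle : Tsum n c (m+1) ≤ 1/2 := by
    rw [hTi]
    have h2 := mul_le_mul_of_nonneg_left hRI hκ0
    rw [← hadd, mul_add] at hT1
    push_cast at h2 hT1 ⊢
    linarith [h2, hT1]
  linarith [hsplit, hTle]

/- ### The median theorem -/

private lemma median_real {n m : ℕ} {p : ℝ} (h0 : 0 ≤ p) (h1 : p ≤ 1) (hnp : (n:ℝ)*p ≤ m) :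
    (1:ℝ)/2 ≤ Fsum n p m := by
  rcases le_or_gt n m with hnm | hmn
  · rw [Fsum_total p hnm]; norm_num
  · have hn0 : (0:ℝ) < (n:ℝ) := by exact_mod_cast (by omega : 0 < n)
    rcases le_or_gt (2*m) n with h2 | h2
    · have hpc : p ≤ (m:ℝ)/n := by
        rw [le_div_iff₀ hn0]
        linarith [hnp]
      have hcle : (m:ℝ)/n ≤ 1 := by
        rw [div_le_one hn0]
        exact_mod_cast hmn.le
      have hA := Fsum_anti (n := n) (m := m) h0 hpc hcle
      linarith [coreA h2 hmn, hA]
    · set a := n - m with ha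
      have ha1 : 1 ≤ a := by omega
      have h2a : 2*a ≤ n := by omega
      have haR : ((a:ℕ):ℝ) = (n:ℝ) - m := by
        rw [ha]; push_cast [Nat.cast_sub hmn.le]; ring
      have hq : (a:ℝ)/n ≤ 1 - p := by
        rw [div_le_iff₀ hn0, haR]
        nlinarith [hnp]
      have hsym := Fsum_eq_Tsum (n := n) (m := m) p hmn.le
      have hs1 := Fsum_add_Tsum (n := n) (k := a) (1-p) ha1 (by omega)
      have hs2 := Fsum_add_Tsum (n := n) (k := a) ((a:ℝ)/n) ha1 (by omega)
      have hmono := Fsum_anti (n := n) (m := a-1) (p := (a:ℝ)/n) (p' := 1-p) (by positivity) hq (by linarith)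
      have hcoreB := coreB ha1 h2a
      rw [hsym]
      linarith [hs1, hs2, hmono, hcoreB]

private lemma key_half {X : Type*} [MeasurableSpace X] (P : Measure X) [IsProbabilityMeasure P]
    {A : Set X} (hA : MeasurableSet A) (n m : ℕ) (hm : (n:ℝ) * (P A).toReal ≤ m) :
    (1:ℝ≥0∞)/2 ≤ (Measure.pi fun _ : Fin n => P) {x | cntf A x ≤ m} := by
  rw [cdf_cnt P hA n m]
  have hp0 : (0:ℝ) ≤ (P A).toReal := ENNReal.toReal_nonneg
  have hp1 : (P A).toReal ≤ 1 := by
    have h := prob_le_one (μ := P) (s := A)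
    have h' := ENNReal.toReal_mono ENNReal.one_ne_top h
    simpa using h'
  have hmed := median_real hp0 hp1 hm
  have hhalf : (1:ℝ≥0∞)/2 = ENNReal.ofReal (1/2) := by
    rw [ENNReal.ofReal_div_of_pos (by norm_num : (0:ℝ) < 2)]
    simp
  rw [hhalf]
  exact ENNReal.ofReal_le_ofReal hmed

/-- Vapnik's symmetrization inequality: if n > 2/ε, then
P^n{ x : sup_{A∈S} |ν_x(A) − P(A)| > ε } ≤
  2 P^{2n}{ (x,x') : sup_{A∈S} |ν_x(A) − ν_{x'}(A)| > ε/2 }. -/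
theorem stmt16 {X : Type*} [MeasurableSpace X] (P : Measure X) [IsProbabilityMeasure P]
    (S : Set (Set X)) (hS : ∀ A ∈ S, MeasurableSet A)
    (n : ℕ) (ε : ℝ) (hε : 0 < ε) (hn : 2 / ε < (n : ℝ))
    (ν : (Fin n → X) → Set X → ℝ)
    (hν : ∀ x A, ν x A = ((Finset.univ.filter fun i => x i ∈ A).card : ℝ) / n) :
    (Measure.pi fun _ : Fin n => P) {x | ∃ A ∈ S, ε < |ν x A - (P A).toReal|} ≤
      2 * ((Measure.pi fun _ : Fin n => P).prod (Measure.pi fun _ : Fin n => P))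
        {p | ∃ A ∈ S, ε / 2 < |ν p.1 A - ν p.2 A|} := by
  classical
  set μ : Measure (Fin n → X) := Measure.pi fun _ : Fin n => P with hμ
  have hn0 : (0:ℝ) < n := lt_trans (by positivity) hn
  have hinv : 1/(n:ℝ) < ε/2 := by
    rw [div_lt_iff₀ hε] at hn
    rw [div_lt_div_iff₀ hn0 (by norm_num : (0:ℝ) < 2)]
    linarith
  set F : Set ((Fin n → X) × (Fin n → X)) := {p | ∃ A ∈ S, ε / 2 < |ν p.1 A - ν p.2 A|}
    with hFdef
  set T := toMeasurable (μ.prod μ) F with hTdef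
  have hTmeas : MeasurableSet T := measurableSet_toMeasurable _ _
  have hFT : F ⊆ T := subset_toMeasurable _ _
  have hTF : (μ.prod μ) T = (μ.prod μ) F := measure_toMeasurable F
  have hkey : ∀ x ∈ {x : Fin n → X | ∃ A ∈ S, ε < |ν x A - (P A).toReal|},
      (1:ℝ≥0∞)/2 ≤ μ (Prod.mk x ⁻¹' T) := by
    intro x hx
    obtain ⟨A, hAS, hdev⟩ := hx
    have hA := hS A hAS
    rcases lt_abs.mp hdev with hpos | hneg
    · -- upper deviation : ν x A > P A + ε
      set p : ℝ := (P A).toReal with hpdef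
      have hp0 : (0:ℝ) ≤ p := ENNReal.toReal_nonneg
      set m : ℕ := ⌊(n:ℝ)*p⌋₊ + 1 with hm
      have hmge : (n:ℝ)*p ≤ m := by
        rw [hm]; push_cast
        exact (Nat.lt_floor_add_one _).le
      have hmle : (m:ℝ) ≤ (n:ℝ)*p + 1 := by
        rw [hm]; push_cast
        have h' := Nat.floor_le (by positivity : (0:ℝ) ≤ (n:ℝ)*p)
        linarith
      have h12 := key_half P hA n m hmge
      refine le_trans h12 (measure_mono ?_)
      intro y hy
      simp only [Set.mem_setOf_eq] at hy
      apply hFT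
      refine ⟨A, hAS, ?_⟩
      have hcy : ((cntf A y : ℕ):ℝ) ≤ (m:ℝ) := by exact_mod_cast hy
      have hνy : ν y A ≤ p + 1/n := by
        rw [hν]
        have hid : ((Finset.univ.filter fun i => y i ∈ A).card : ℝ) = ((cntf A y : ℕ):ℝ) := rfl
        rw [hid, div_le_iff₀ hn0]
        have he : (p + 1/(n:ℝ)) * n = (n:ℝ)*p + 1 := by field_simp
        rw [he]
        linarith
      have hgap : ε/2 < ν x A - ν y A := by linarith
      exact lt_of_lt_of_le hgap (le_abs_self _)
    · -- lower deviation : ν x A < P A - ε ; use the complement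
      set p : ℝ := (P A).toReal with hpdef
      have hp0 : (0:ℝ) ≤ p := ENNReal.toReal_nonneg
      set q : ℝ := (P Aᶜ).toReal with hqdef
      have hq0 : (0:ℝ) ≤ q := ENNReal.toReal_nonneg
      have hqp : q = 1 - p := by
        rw [hqdef, prob_compl_eq_one_sub hA,
          ENNReal.toReal_sub_of_le prob_le_one ENNReal.one_ne_top]
        simp [hpdef]
      set m : ℕ := ⌊(n:ℝ)*q⌋₊ + 1 with hm
      have hmge : (n:ℝ)*q ≤ m := by
        rw [hm]; push_cast
        exact (Nat.lt_floor_add_one _).le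
      have hmle : (m:ℝ) ≤ (n:ℝ)*q + 1 := by
        rw [hm]; push_cast
        have h' := Nat.floor_le (by positivity : (0:ℝ) ≤ (n:ℝ)*q)
        linarith
      have h12 := key_half P hA.compl n m hmge
      refine le_trans h12 (measure_mono ?_)
      intro y hy
      simp only [Set.mem_setOf_eq] at hy
      apply hFT
      refine ⟨A, hAS, ?_⟩
      have hsum : cntf A y + cntf Aᶜ y = n := by
        unfold cntf
        rw [Finset.card_filter, Finset.card_filter]
        have hone : ∀ i : Fin n, ((if y i ∈ A then (1:ℕ) else 0)
            + (if y i ∈ Aᶜ then (1:ℕ) else 0)) = 1 := by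
          intro i
          by_cases h' : y i ∈ A <;> simp [h']
        have htot : ∑ i : Fin n, ((if y i ∈ A then (1:ℕ) else 0)
            + (if y i ∈ Aᶜ then (1:ℕ) else 0)) = n := by
          rw [Finset.sum_congr rfl (fun i _ => hone i)]
          simp
        have hstep : (∑ i : Fin n, if y i ∈ A then (1:ℕ) else 0)
              + (∑ i : Fin n, if y i ∈ Aᶜ then (1:ℕ) else 0) = n :=
          Finset.sum_add_distrib.symm.trans htot
        convert hstep using 2
        refine Finset.sum_congr rfl (fun i _ => ?_)
        by_cases h' : y i ∈ Aᶜ <;> simp [h']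
      have hcy : ((cntf Aᶜ y : ℕ):ℝ) ≤ (m:ℝ) := by exact_mod_cast hy
      have hcA : ((cntf A y : ℕ):ℝ) = (n:ℝ) - ((cntf Aᶜ y : ℕ):ℝ) := by
        have := congrArg (fun t : ℕ => (t:ℝ)) hsum
        push_cast at this
        linarith
      have hνy : p - 1/n ≤ ν y A := by
        rw [hν]
        have hid : ((Finset.univ.filter fun i => y i ∈ A).card : ℝ) = ((cntf A y : ℕ):ℝ) := rfl
        rw [hid, le_div_iff₀ hn0]
        have he : (p - 1/(n:ℝ)) * n = (n:ℝ)*p - 1 := by field_simp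
        rw [he, hcA]
        have : (m:ℝ) ≤ (n:ℝ)*(1-p) + 1 := by rw [← hqp]; exact hmle
        linarith
      have hgap : ε/2 < ν y A - ν x A := by linarith
      have : ε/2 < |ν y A - ν x A| := lt_of_lt_of_le hgap (le_abs_self _)
      rwa [abs_sub_comm] at this
  set h : (Fin n → X) → ℝ≥0∞ := fun x => μ (Prod.mk x ⁻¹' T) with hhdef
  have hhm : Measurable h := measurable_measure_prodMk_left hTmeas
  set H := {x : Fin n → X | (1:ℝ≥0∞)/2 ≤ h x} with hHdef
  have hHmeas : MeasurableSet H := measurableSet_le measurable_const hhm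
  have hEH : {x : Fin n → X | ∃ A ∈ S, ε < |ν x A - (P A).toReal|} ⊆ H := by
    intro x hx
    exact hkey x hx
  have hint : (μ.prod μ) T = ∫⁻ x, h x ∂μ := Measure.prod_apply hTmeas
  have hHbound : (1:ℝ≥0∞)/2 * μ H ≤ (μ.prod μ) F := by
    rw [← hTF, hint]
    calc (1:ℝ≥0∞)/2 * μ H = ∫⁻ _ in H, (1:ℝ≥0∞)/2 ∂μ := (setLIntegral_const H _).symm
      _ ≤ ∫⁻ x in H, h x ∂μ := setLIntegral_mono hhm (fun x hx => hx)
      _ ≤ ∫⁻ x, h x ∂μ := setLIntegral_le_lintegral _ _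
  have h2 : (2:ℝ≥0∞) * ((1:ℝ≥0∞)/2) = 1 := by
    rw [one_div]
    exact ENNReal.mul_inv_cancel (by norm_num) (by norm_num)
  calc μ {x | ∃ A ∈ S, ε < |ν x A - (P A).toReal|}
      ≤ μ H := measure_mono hEH
    _ = 2 * ((1:ℝ≥0∞)/2 * μ H) := by rw [← mul_assoc, h2, one_mul]
    _ ≤ 2 * ((μ.prod μ) F) := mul_le_mul_right hHbound 2
end
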